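/- arXiv:1011.6546 — 3 statements merged into one kernel-verified Lean document; each statement's English description precedes it below -/
import Mathlib

section
/- Let q ∈ (0,1), let l₀ ∈ ℝ, let ε₀, c₀, η, C > 0 and 0 < α₀ ≤ α₁. For each l ≥ l₀ suppose given functions on D := [−ε₀, ε₀] × [−ε₀, ε₀]: (i) F(l, ·, ·) : D → ℝ, C¹, with |∂F/∂ψ(l, ψ, λ)| ≤ q, |∂F/∂λ(l, ψ, λ)| ≤ C, and |F(l, 0, 0)| ≤ C e^{−η l}; (ii) M(l, ·, ·) : D → ℝ, C¹, with c₀ ≤ |M(l, ψ, λ)| ≤ C and |∂M/∂ψ| + |∂M/∂λ| ≤ C; (iii) a number a(l) with 1/C ≤ a(l) ≤ C; (iv) α(l, ·, ·) : D → [α₀, α₁], C¹, with |∂α/∂ψ| + |∂α/∂λ| ≤ C; (v) a number r(l) with |r(l)| ≤ C e^{−η l}. Then there exist l₁ ≥ l₀, η' > 0 and C' > 0 such that for every l ≥ l₁ the system of equations ψ = F(l, ψ, λ) and a(l) e^{−2α(l, ψ, λ) l}(1 + r(l)) = λ · M(l, ψ, λ) has exactly one solution (ψ*(l), λ*(l))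 ∈ D, and it satisfies |λ*(l) − (a(l)/M(l, 0, 0)) e^{−2α(l, 0, 0) l}| ≤ C' e^{−2α(l, 0, 0) l} e^{−η' l} and |ψ*(l)| ≤ C' e^{−η' l}. -/
open Set Real Filter Topology

/-!
For fixed large `l` the system is the fixed-point problem for
`(ψ, μ) ↦ (F(l, ψ, μ), G(ψ, μ))`, where `G = a e^{-2αl} (1 + r) / M` is the second equation
solved for `μ`. The first equation is a `q`-contraction in `ψ`, so it defines `ψ = h(μ)` with `h`
Lipschitz of constant `C / (1 - q)`, and `G` is bounded by `O(e^{-2α₀ l})` with Lipschitz constant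
`O(l e^{-2α₀ l})`; hence `μ ↦ G(h μ, μ)` is a contraction for large `l`. Every solution then
satisfies `|μ| = O(e^{-2α₀ l})` and `|ψ| = O(e^{-η₁ l})` with `η₁ = min η (2α₀)`, so
`α(ψ, μ) - α(0, 0)` and `M(ψ, μ) - M(0, 0)` are `O(e^{-η₁ l})`. The exponent `-2α(ψ, μ) l` is
therefore `-2α(0, 0) l + O(l e^{-η₁ l})`, which gives the leading-order formula with relative
error `O(l e^{-η₁ l}) = O(e^{-η₁ l / 2})`.
-/

lemma abs_sub_le_of_hasDerivAt_of_abs_le {s t : Set ℝ} (hs : Convex ℝ s) (ht : Convex ℝ t)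
    {f fx fy : ℝ → ℝ → ℝ} {Lx Ly : ℝ}
    (hfx : ∀ x ∈ s, ∀ y ∈ t, HasDerivAt (f · y) (fx x y) x)
    (hfy : ∀ x ∈ s, ∀ y ∈ t, HasDerivAt (f x ·) (fy x y) y)
    (hLx : ∀ x ∈ s, ∀ y ∈ t, |fx x y| ≤ Lx) (hLy : ∀ x ∈ s, ∀ y ∈ t, |fy x y| ≤ Ly)
    {x x' y y' : ℝ} (hx : x ∈ s) (hx' : x' ∈ s) (hy : y ∈ t) (hy' : y' ∈ t) :
    |f x y - f x' y'| ≤ Lx * |x - x'| + Ly * |y - y'| := by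
  have h₁ : |f x y - f x' y| ≤ Lx * |x - x'| :=
    hs.norm_image_sub_le_of_norm_hasDerivWithin_le
      (fun z hz => (hfx z hz y hy).hasDerivWithinAt) (fun z hz => hLx z hz y hy) hx' hx
  have h₂ : |f x' y - f x' y'| ≤ Ly * |y - y'| :=
    ht.norm_image_sub_le_of_norm_hasDerivWithin_le
      (fun z hz => (hfy x' hx' z hz).hasDerivWithinAt) (fun z hz => hLy x' hx' z hz) hy' hy
  calc |f x y - f x' y'| ≤ |f x y - f x' y| + |f x' y - f x' y'| := abs_sub_le _ _ _
    _ ≤ _ := add_le_add h₁ h₂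

lemma abs_exp_sub_exp_le_of_le {x y m : ℝ} (hx : x ≤ m) (hy : y ≤ m) :
    |exp x - exp y| ≤ exp m * |x - y| :=
  (convex_Iic m).norm_image_sub_le_of_norm_deriv_le (fun _ _ => differentiableAt_exp)
    (fun z hz => by simpa using exp_le_exp.2 hz) hy hx

lemma abs_div_sub_div_le {u u' v v' c U : ℝ} (hc : 0 < c) (hv : c ≤ |v|) (hv' : c ≤ |v'|)
    (hu' : |u'| ≤ U) : |u / v - u' / v'| ≤ |u - u'| / c + U * |v - v'| / c ^ 2 := by
  have hv0 : v ≠ 0 := abs_pos.1 (hc.trans_le hv)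
  have hv'0 : v' ≠ 0 := abs_pos.1 (hc.trans_le hv')
  have hU : 0 ≤ U := (abs_nonneg u').trans hu'
  have hsplit : u / v - u' / v' = (u - u') / v + u' * (v' - v) / (v * v') := by
    field_simp; ring
  rw [hsplit]
  refine (abs_add_le _ _).trans (add_le_add ?_ ?_)
  · rw [abs_div]; gcongr
  · rw [abs_div, abs_mul, abs_mul, abs_sub_comm, sq]
    gcongr

lemma abs_mul_exp_add_div_sub_le {a r m m₀ s t c : ℝ} (hc : 0 < c) (hm : c ≤ |m|)
    (hm₀ : c ≤ |m₀|) (ht : |t| ≤ 1) (hr : |r| ≤ 1) :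
    |a * (1 + r) * (exp (s + t) / m) - a / m₀ * exp s| ≤
      |a| * exp s * ((4 * |t| + |r|) / c + |m - m₀| / c ^ 2) := by
  have hsplit : a * (1 + r) * (exp (s + t) / m) - a / m₀ * exp s =
      a * exp s * (exp t * (1 + r) / m - 1 / m₀) := by
    rw [exp_add]; ring
  have hnum : |exp t * (1 + r) - 1| ≤ 4 * |t| + |r| := by
    have h1r : |1 + r| ≤ 2 := (abs_add_le _ _).trans (by norm_num; linarith)
    calc |exp t * (1 + r) - 1| = |(exp t - 1) * (1 + r) + r| := by ring_nf
      _ ≤ 2 * |t| * 2 + |r| := by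
        refine (abs_add_le _ _).trans (add_le_add ?_ le_rfl)
        rw [abs_mul]
        exact mul_le_mul (abs_exp_sub_one_le ht) h1r (abs_nonneg _) (by positivity)
      _ = 4 * |t| + |r| := by ring
  rw [hsplit, abs_mul, abs_mul, abs_of_pos (exp_pos s)]
  gcongr
  calc _ ≤ |exp t * (1 + r) - 1| / c + 1 * |m - m₀| / c ^ 2 :=
        abs_div_sub_div_le hc hm hm₀ (by simp)
    _ ≤ _ := by rw [one_mul]; gcongr

theorem tendsto_mul_exp_neg_mul_atTop {c : ℝ} (hc : 0 < c) :
    Tendsto (fun l => l * exp (-c * l)) atTop (𝓝 0) := by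
  have := ((tendsto_pow_mul_exp_neg_atTop_nhds_zero 1).comp
    (tendsto_id.const_mul_atTop hc)).const_mul c⁻¹
  rw [mul_zero] at this
  refine this.congr fun l => ?_
  simp only [Function.comp, id, pow_one, neg_mul]
  field_simp

theorem eventually_mul_mul_exp_neg_lt {c b : ℝ} (hc : 0 < c) (hb : 0 < b) (K : ℝ) :
    ∀ᶠ l in atTop, K * (l * exp (-c * l)) < b := by
  have := (tendsto_mul_exp_neg_mul_atTop hc).const_mul K
  rw [mul_zero] at this
  exact this.eventually (gt_mem_nhds hb)

theorem exists_unique_fixedPt_of_dist_le_mul {X : Type*} [MetricSpace X] {s : Set X}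
    (hs : IsComplete s) (hne : s.Nonempty) {f : X → X} {k : ℝ} (hk : k < 1) (hmaps : MapsTo f s s)
    (hf : ∀ x ∈ s, ∀ y ∈ s, dist (f x) (f y) ≤ k * dist x y) :
    ∃ x ∈ s, f x = x ∧ ∀ y ∈ s, f y = y → y = x := by
  have hcontr : ContractingWith k.toNNReal (hmaps.restrict f s s) :=
    ⟨Real.toNNReal_lt_one.2 hk, LipschitzWith.of_dist_le_mul fun x y =>
      (hf x x.2 y y.2).trans (mul_le_mul_of_nonneg_right (le_coe_toNNReal k) dist_nonneg)⟩
  obtain ⟨x₀, hx₀⟩ := hne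
  obtain ⟨x, hxs, hfx, -⟩ := hcontr.exists_fixedPoint' hs hmaps hx₀ (edist_ne_top _ _)
  refine ⟨x, hxs, hfx, fun y hys hfy => dist_le_zero.1 ?_⟩
  have := hf y hys x hxs
  rw [hfy, hfx] at this
  nlinarith [dist_nonneg (x := y) (y := x)]

/-- Solve `f x y = x` for `x = h y` first; `h` is `L / (1 - q)`-Lipschitz, which makes
`y ↦ g (h y) y` a contraction. -/
theorem exists_unique_fixedPt_of_triangular {X Y : Type*} [MetricSpace X] [MetricSpace Y]
    {s : Set X} {t : Set Y} (hs : IsComplete s) (ht : IsComplete t) (hsne : s.Nonempty)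
    (htne : t.Nonempty)
    {f : X → Y → X} {g : X → Y → Y} {q L δ : ℝ} (hq : q < 1) (hδ : 0 ≤ δ)
    (hδL : δ * (L / (1 - q) + 1) < 1)
    (hfs : ∀ x ∈ s, ∀ y ∈ t, f x y ∈ s) (hgt : ∀ x ∈ s, ∀ y ∈ t, g x y ∈ t)
    (hf : ∀ x ∈ s, ∀ x' ∈ s, ∀ y ∈ t, ∀ y' ∈ t,
      dist (f x y) (f x' y') ≤ q * dist x x' + L * dist y y')
    (hg : ∀ x ∈ s, ∀ x' ∈ s, ∀ y ∈ t, ∀ y' ∈ t,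
      dist (g x y) (g x' y') ≤ δ * (dist x x' + dist y y')) :
    ∃ x ∈ s, ∃ y ∈ t, f x y = x ∧ g x y = y ∧
      ∀ x' ∈ s, ∀ y' ∈ t, f x' y' = x' → g x' y' = y' → x' = x ∧ y' = y := by
  have hfix : ∀ y ∈ t, ∃ x ∈ s, f x y = x ∧ ∀ x' ∈ s, f x' y = x' → x' = x := fun y hy =>
    exists_unique_fixedPt_of_dist_le_mul hs hsne hq (fun x hx => hfs x hx y hy)
      (fun x hx x' hx' => by simpa using hf x hx x' hx' y hy y hy)
  have : Nonempty X := ⟨hsne.some⟩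
  choose! h hhs hhfix hhuniq using hfix
  have hlip : ∀ y ∈ t, ∀ y' ∈ t, dist (h y) (h y') ≤ L / (1 - q) * dist y y' := by
    intro y hy y' hy'
    have := hf _ (hhs y hy) _ (hhs y' hy') y hy y' hy'
    rw [hhfix y hy, hhfix y' hy'] at this
    rw [div_mul_eq_mul_div, le_div_iff₀ (by linarith)]
    linarith
  obtain ⟨y, hy, hgy, hyuniq⟩ := exists_unique_fixedPt_of_dist_le_mul ht htne hδL
    (fun y hy => hgt _ (hhs y hy) y hy) fun y hy y' hy' =>
      calc dist (g (h y) y) (g (h y') y') ≤ δ * (dist (h y) (h y') + dist y y') :=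
            hg _ (hhs y hy) _ (hhs y' hy') y hy y' hy'
        _ ≤ δ * (L / (1 - q) * dist y y' + dist y y') := by gcongr; exact hlip y hy y' hy'
        _ = δ * (L / (1 - q) + 1) * dist y y' := by ring
  refine ⟨h y, hhs y hy, y, hy, hhfix y hy, hgy, fun x' hx' y' hy' hfx' hgx' => ?_⟩
  obtain rfl : x' = h y' := hhuniq y' hy' x' hx' hfx'
  obtain rfl : y' = y := hyuniq y' hy' hgx'
  exact ⟨rfl, rfl⟩

/-- Hypotheses (i)–(v) at a fixed `l`, with the derivative bounds integrated into Lipschitz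
bounds on the square `[-ε, ε]²`. -/
structure CouplingHyp (q ε c₀ η C α₀ l a r : ℝ) (F M α : ℝ → ℝ → ℝ) : Prop where
  abs_F_sub_le : ∀ x ∈ Icc (-ε) ε, ∀ x' ∈ Icc (-ε) ε, ∀ y ∈ Icc (-ε) ε, ∀ y' ∈ Icc (-ε) ε,
    |F x y - F x' y'| ≤ q * |x - x'| + C * |y - y'|
  abs_M_sub_le : ∀ x ∈ Icc (-ε) ε, ∀ x' ∈ Icc (-ε) ε, ∀ y ∈ Icc (-ε) ε, ∀ y' ∈ Icc (-ε) ε,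
    |M x y - M x' y'| ≤ C * |x - x'| + C * |y - y'|
  abs_α_sub_le : ∀ x ∈ Icc (-ε) ε, ∀ x' ∈ Icc (-ε) ε, ∀ y ∈ Icc (-ε) ε, ∀ y' ∈ Icc (-ε) ε,
    |α x y - α x' y'| ≤ C * |x - x'| + C * |y - y'|
  le_abs_M : ∀ x ∈ Icc (-ε) ε, ∀ y ∈ Icc (-ε) ε, c₀ ≤ |M x y|
  le_α : ∀ x ∈ Icc (-ε) ε, ∀ y ∈ Icc (-ε) ε, α₀ ≤ α x y
  abs_a_le : |a| ≤ C
  abs_F_zero_le : |F 0 0| ≤ C * exp (-η * l)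
  abs_r_le : |r| ≤ C * exp (-η * l)

theorem CouplingHyp.of_hasDerivAt {q ε c₀ η C α₀ α₁ l a r : ℝ}
    {F M α Fψ Fμ Mψ Mμ αψ αμ : ℝ → ℝ → ℝ}
    (hF : ∀ ψ ∈ Icc (-ε) ε, ∀ μ ∈ Icc (-ε) ε,
      HasDerivAt (fun x => F x μ) (Fψ ψ μ) ψ ∧ HasDerivAt (fun y => F ψ y) (Fμ ψ μ) μ ∧
      |Fψ ψ μ| ≤ q ∧ |Fμ ψ μ| ≤ C)
    (hF0 : |F 0 0| ≤ C * exp (-η * l))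
    (hM : ∀ ψ ∈ Icc (-ε) ε, ∀ μ ∈ Icc (-ε) ε,
      HasDerivAt (fun x => M x μ) (Mψ ψ μ) ψ ∧ HasDerivAt (fun y => M ψ y) (Mμ ψ μ) μ ∧
      c₀ ≤ |M ψ μ| ∧ |M ψ μ| ≤ C ∧ |Mψ ψ μ| + |Mμ ψ μ| ≤ C)
    (ha : |a| ≤ C)
    (hα : ∀ ψ ∈ Icc (-ε) ε, ∀ μ ∈ Icc (-ε) ε,
      HasDerivAt (fun x => α x μ) (αψ ψ μ) ψ ∧ HasDerivAt (fun y => α ψ y) (αμ ψ μ) μ ∧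
      α ψ μ ∈ Icc α₀ α₁ ∧ |αψ ψ μ| + |αμ ψ μ| ≤ C)
    (hr : |r| ≤ C * exp (-η * l)) :
    CouplingHyp q ε c₀ η C α₀ l a r F M α where
  abs_F_sub_le _ hx _ hx' _ hy _ hy' := abs_sub_le_of_hasDerivAt_of_abs_le (convex_Icc _ _)
    (convex_Icc _ _) (fun x hx y hy => (hF x hx y hy).1) (fun x hx y hy => (hF x hx y hy).2.1)
    (fun x hx y hy => (hF x hx y hy).2.2.1) (fun x hx y hy => (hF x hx y hy).2.2.2) hx hx' hy hy'
  abs_M_sub_le _ hx _ hx' _ hy _ hy' := abs_sub_le_of_hasDerivAt_of_abs_le (convex_Icc _ _)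
    (convex_Icc _ _) (fun x hx y hy => (hM x hx y hy).1) (fun x hx y hy => (hM x hx y hy).2.1)
    (fun x hx y hy => (le_add_of_nonneg_right (abs_nonneg _)).trans (hM x hx y hy).2.2.2.2)
    (fun x hx y hy => (le_add_of_nonneg_left (abs_nonneg _)).trans (hM x hx y hy).2.2.2.2)
    hx hx' hy hy'
  abs_α_sub_le _ hx _ hx' _ hy _ hy' := abs_sub_le_of_hasDerivAt_of_abs_le (convex_Icc _ _)
    (convex_Icc _ _) (fun x hx y hy => (hα x hx y hy).1) (fun x hx y hy => (hα x hx y hy).2.1)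
    (fun x hx y hy => (le_add_of_nonneg_right (abs_nonneg _)).trans (hα x hx y hy).2.2.2)
    (fun x hx y hy => (le_add_of_nonneg_left (abs_nonneg _)).trans (hα x hx y hy).2.2.2)
    hx hx' hy hy'
  le_abs_M x hx y hy := (hM x hx y hy).2.2.1
  le_α x hx y hy := (hα x hx y hy).2.2.1.1
  abs_a_le := ha
  abs_F_zero_le := hF0
  abs_r_le := hr

noncomputable def couplingRhs (a r l : ℝ) (α M : ℝ → ℝ → ℝ) (ψ μ : ℝ) : ℝ :=
  a * (1 + r) * (exp (-2 * α ψ μ * l) / M ψ μ)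

theorem couplingRhs_eq_iff {a r l ψ μ : ℝ} {α M : ℝ → ℝ → ℝ} (hM : M ψ μ ≠ 0) :
    couplingRhs a r l α M ψ μ = μ ↔ a * exp (-2 * α ψ μ * l) * (1 + r) = μ * M ψ μ := by
  rw [couplingRhs, mul_div_assoc', div_eq_iff hM]
  constructor <;> intro h <;> linarith

lemma zero_mem_Icc_neg_of_mem {ε x : ℝ} (hx : x ∈ Icc (-ε) ε) : (0 : ℝ) ∈ Icc (-ε) ε :=
  ⟨by linarith [hx.1, hx.2], by linarith [hx.1, hx.2]⟩

namespace CouplingHyp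

variable {q ε c₀ η C α₀ l a r : ℝ} {F M α : ℝ → ℝ → ℝ} {x x' y y' : ℝ}

theorem nonneg_C (h : CouplingHyp q ε c₀ η C α₀ l a r F M α) : 0 ≤ C :=
  (abs_nonneg a).trans h.abs_a_le

theorem M_ne_zero (h : CouplingHyp q ε c₀ η C α₀ l a r F M α) (hc₀ : 0 < c₀)
    (hx : x ∈ Icc (-ε) ε) (hy : y ∈ Icc (-ε) ε) : M x y ≠ 0 :=
  abs_pos.1 (hc₀.trans_le (h.le_abs_M x hx y hy))

theorem exponent_le (h : CouplingHyp q ε c₀ η C α₀ l a r F M α) (hl : 0 ≤ l)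
    (hx : x ∈ Icc (-ε) ε) (hy : y ∈ Icc (-ε) ε) : -2 * α x y * l ≤ -2 * α₀ * l := by
  nlinarith [h.le_α x hx y hy]

theorem abs_F_le (h : CouplingHyp q ε c₀ η C α₀ l a r F M α) (hx : x ∈ Icc (-ε) ε)
    (hy : y ∈ Icc (-ε) ε) : |F x y| ≤ C * exp (-η * l) + q * |x| + C * |y| := by
  have h0 := zero_mem_Icc_neg_of_mem hx
  have hF := h.abs_F_sub_le x hx 0 h0 y hy 0 h0
  rw [sub_zero, sub_zero] at hF
  linarith [abs_sub_abs_le_abs_sub (F x y) (F 0 0), h.abs_F_zero_le]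

theorem abs_couplingRhs_le (h : CouplingHyp q ε c₀ η C α₀ l a r F M α) (hc₀ : 0 < c₀)
    (hl : 0 ≤ l) (hr : |r| ≤ 1) (hx : x ∈ Icc (-ε) ε) (hy : y ∈ Icc (-ε) ε) :
    |couplingRhs a r l α M x y| ≤ 2 * C / c₀ * exp (-2 * α₀ * l) := by
  have hC := h.nonneg_C
  have ha := h.abs_a_le
  have h1r : |1 + r| ≤ 2 := (abs_add_le _ _).trans (by norm_num; linarith)
  have hquot : exp (-2 * α x y * l) / |M x y| ≤ exp (-2 * α₀ * l) / c₀ :=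
    div_le_div₀ (exp_pos _).le (exp_le_exp.2 (h.exponent_le hl hx hy)) hc₀ (h.le_abs_M x hx y hy)
  rw [couplingRhs, abs_mul, abs_mul, abs_div, abs_of_pos (exp_pos _)]
  calc |a| * |1 + r| * (exp (-2 * α x y * l) / |M x y|)
      ≤ C * 2 * (exp (-2 * α₀ * l) / c₀) := by gcongr
    _ = 2 * C / c₀ * exp (-2 * α₀ * l) := by ring

theorem abs_couplingRhs_sub_le (h : CouplingHyp q ε c₀ η C α₀ l a r F M α) (hc₀ : 0 < c₀)
    (hl : 0 ≤ l) (hr : |r| ≤ 1) (hx : x ∈ Icc (-ε) ε) (hx' : x' ∈ Icc (-ε) ε)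
    (hy : y ∈ Icc (-ε) ε) (hy' : y' ∈ Icc (-ε) ε) :
    |couplingRhs a r l α M x y - couplingRhs a r l α M x' y'| ≤
      2 * C * (2 * C * l / c₀ + C / c₀ ^ 2) * exp (-2 * α₀ * l) * (|x - x'| + |y - y'|) := by
  have hC := h.nonneg_C
  have h1r : |1 + r| ≤ 2 := (abs_add_le _ _).trans (by norm_num; linarith)
  have hexp : |exp (-2 * α x y * l) - exp (-2 * α x' y' * l)| ≤
      exp (-2 * α₀ * l) * (2 * l * (C * |x - x'| + C * |y - y'|)) := by
    refine (abs_exp_sub_exp_le_of_le (h.exponent_le hl hx hy)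
      (h.exponent_le hl hx' hy')).trans ?_
    gcongr
    calc |-2 * α x y * l - -2 * α x' y' * l| = 2 * l * |α x y - α x' y'| := by
          rw [show -2 * α x y * l - -2 * α x' y' * l = 2 * l * -(α x y - α x' y') by ring,
            abs_mul, abs_neg, abs_of_nonneg (by positivity : (0 : ℝ) ≤ 2 * l)]
      _ ≤ _ := by gcongr; exact h.abs_α_sub_le x hx x' hx' y hy y' hy'
  have hquot : |exp (-2 * α x y * l) / M x y - exp (-2 * α x' y' * l) / M x' y'| ≤
      |exp (-2 * α x y * l) - exp (-2 * α x' y' * l)| / c₀ +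
        exp (-2 * α₀ * l) * |M x y - M x' y'| / c₀ ^ 2 :=
    abs_div_sub_div_le hc₀ (h.le_abs_M x hx y hy) (h.le_abs_M x' hx' y' hy')
      (by rw [abs_of_pos (exp_pos _)]; exact exp_le_exp.2 (h.exponent_le hl hx' hy'))
  rw [couplingRhs, couplingRhs, ← mul_sub, abs_mul, abs_mul]
  calc |a| * |1 + r| * |exp (-2 * α x y * l) / M x y - exp (-2 * α x' y' * l) / M x' y'|
      ≤ C * 2 * (exp (-2 * α₀ * l) * (2 * l * (C * |x - x'| + C * |y - y'|)) / c₀ +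
          exp (-2 * α₀ * l) * (C * |x - x'| + C * |y - y'|) / c₀ ^ 2) := by
        gcongr
        · exact h.abs_a_le
        · refine hquot.trans ?_
          gcongr
          exact h.abs_M_sub_le x hx x' hx' y hy y' hy'
    _ = _ := by field_simp

/-- The `μ`-component is confined to `[-ρ, ρ]`, `ρ = 2C/c₀ · l E`, where `F(·, μ)` maps
`[-ε, ε]` into itself; every solution lies there because `|couplingRhs| ≤ ρ`. -/
theorem exists_unique_fixedPt (h : CouplingHyp q ε c₀ η C α₀ l a r F M α) (hq0 : 0 ≤ q) (hq : q < 1)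
    (hc₀ : 0 < c₀) (hl : 1 ≤ l) (hr : |r| ≤ 1) {E : ℝ} (hEη : exp (-η * l) ≤ E)
    (hEα : exp (-2 * α₀ * l) ≤ E) (hρε : 2 * C / c₀ * (l * E) ≤ ε)
    (hmaps : (C + C * (2 * C / c₀)) * (l * E) ≤ (1 - q) * ε)
    (hδ : 2 * C * (2 * C / c₀ + C / c₀ ^ 2) * (l * E) * (C / (1 - q) + 1) < 1) :
    ∃ ψ ∈ Icc (-ε) ε, ∃ μ ∈ Icc (-ε) ε, F ψ μ = ψ ∧ couplingRhs a r l α M ψ μ = μ ∧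
      ∀ ψ' ∈ Icc (-ε) ε, ∀ μ' ∈ Icc (-ε) ε, F ψ' μ' = ψ' → couplingRhs a r l α M ψ' μ' = μ' →
        ψ' = ψ ∧ μ' = μ := by
  set ρ := 2 * C / c₀ * (l * E)
  have hC := h.nonneg_C
  have hl0 : 0 ≤ l := by linarith
  have hE0 : 0 ≤ E := (exp_pos _).le.trans hEη
  have hElE : E ≤ l * E := le_mul_of_one_le_left hE0 hl
  have hρ0 : 0 ≤ ρ := by positivity
  have hJI : Icc (-ρ) ρ ⊆ Icc (-ε) ε := Icc_subset_Icc (by linarith) hρε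
  have h0 : (0 : ℝ) ∈ Icc (-ε) ε := ⟨by linarith, by linarith⟩
  have hG : ∀ x ∈ Icc (-ε) ε, ∀ y ∈ Icc (-ε) ε, |couplingRhs a r l α M x y| ≤ ρ :=
    fun x hx y hy => (h.abs_couplingRhs_le hc₀ hl0 hr hx hy).trans
      (mul_le_mul_of_nonneg_left (hEα.trans hElE) (by positivity))
  have hmapsF : ∀ x ∈ Icc (-ε) ε, ∀ y ∈ Icc (-ρ) ρ, F x y ∈ Icc (-ε) ε := by
    intro x hx y hy
    have e1 : C * exp (-η * l) ≤ C * (l * E) := by gcongr; exact hEη.trans hElE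
    have e2 : q * |x| ≤ q * ε := by gcongr; exact abs_le.2 hx
    have e3 : C * |y| ≤ C * (2 * C / c₀ * (l * E)) := by gcongr; exact abs_le.2 hy
    exact abs_le.1 (by linarith [h.abs_F_le hx (hJI hy)])
  have hδ' : 2 * C * (2 * C * l / c₀ + C / c₀ ^ 2) * exp (-2 * α₀ * l) ≤
      2 * C * (2 * C / c₀ + C / c₀ ^ 2) * (l * E) :=
    calc _ = 2 * C * (2 * C / c₀ * (l * exp (-2 * α₀ * l)) + C / c₀ ^ 2 * exp (-2 * α₀ * l)) := by
          ring
      _ ≤ 2 * C * (2 * C / c₀ * (l * E) + C / c₀ ^ 2 * (l * E)) := by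
          gcongr; exact hEα.trans hElE
      _ = _ := by ring
  obtain ⟨ψ, hψ, μ, hμ, hFψ, hGμ, huniq⟩ := exists_unique_fixedPt_of_triangular
    isClosed_Icc.isComplete isClosed_Icc.isComplete ⟨0, h0⟩ (nonempty_Icc.2 (by linarith))
    hq (by positivity) hδ hmapsF (fun x hx y hy => abs_le.1 (hG x hx y (hJI hy)))
    (fun x hx x' hx' y hy y' hy' => h.abs_F_sub_le x hx x' hx' y (hJI hy) y' (hJI hy'))
    (fun x hx x' hx' y hy y' hy' => (h.abs_couplingRhs_sub_le hc₀ hl0 hr hx hx' (hJI hy)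
      (hJI hy')).trans (mul_le_mul_of_nonneg_right hδ' (by positivity)))
  refine ⟨ψ, hψ, μ, hJI hμ, hFψ, hGμ, fun ψ' hψ' μ' hμ' hF' hG' => huniq ψ' hψ' μ' ?_ hF' hG'⟩
  rw [← hG']
  exact abs_le.1 (hG ψ' hψ' μ' hμ')

theorem abs_add_abs_le_of_fixedPt (h : CouplingHyp q ε c₀ η C α₀ l a r F M α) (hq : q < 1)
    (hc₀ : 0 < c₀) (hl : 0 ≤ l) (hr : |r| ≤ 1) (hx : x ∈ Icc (-ε) ε) (hy : y ∈ Icc (-ε) ε)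
    (hF : F x y = x) (hG : couplingRhs a r l α M x y = y) {E : ℝ}
    (hEη : exp (-η * l) ≤ E) (hEα : exp (-2 * α₀ * l) ≤ E) :
    |x| + |y| ≤ ((C + C * (2 * C / c₀)) / (1 - q) + 2 * C / c₀) * E := by
  have hC := h.nonneg_C
  have hy' : |y| ≤ 2 * C / c₀ * E :=
    hG ▸ (h.abs_couplingRhs_le hc₀ hl hr hx hy).trans (by gcongr)
  have hx' : (1 - q) * |x| ≤ (C + C * (2 * C / c₀)) * E := by
    have hFx := h.abs_F_le hx hy
    rw [hF] at hFx
    have e1 : C * exp (-η * l) ≤ C * E := by gcongr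
    have e2 : C * |y| ≤ C * (2 * C / c₀ * E) := by gcongr
    linarith
  rw [add_mul, div_mul_eq_mul_div]
  gcongr
  rwa [le_div_iff₀ (by linarith), mul_comm]

theorem abs_couplingRhs_sub_leading_le (h : CouplingHyp q ε c₀ η C α₀ l a r F M α)
    (hc₀ : 0 < c₀) (hl : 1 ≤ l) (hr : |r| ≤ 1) (hx : x ∈ Icc (-ε) ε) (hy : y ∈ Icc (-ε) ε)
    {ν : ℝ} (hlν : l * (|x| + |y|) ≤ ν) (hrν : |r| ≤ ν) (hsmall : 2 * C * ν ≤ 1) :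
    |couplingRhs a r l α M x y - a / M 0 0 * exp (-2 * α 0 0 * l)| ≤
      C * (8 * C + 1 + C / c₀) / c₀ * exp (-2 * α 0 0 * l) * ν := by
  have hC := h.nonneg_C
  have h0 := zero_mem_Icc_neg_of_mem hx
  have hα := h.abs_α_sub_le x hx 0 h0 y hy 0 h0
  have hM := h.abs_M_sub_le x hx 0 h0 y hy 0 h0
  simp only [sub_zero] at hα hM
  have hν : |x| + |y| ≤ ν := (le_mul_of_one_le_left (by positivity) hl).trans hlν
  have ht : |-2 * (α x y - α 0 0) * l| ≤ 2 * C * ν := by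
    rw [abs_mul, abs_mul, abs_of_nonneg (by linarith : (0 : ℝ) ≤ l)]
    norm_num
    nlinarith
  have key := abs_mul_exp_add_div_sub_le (a := a) (r := r) (s := -2 * α 0 0 * l) hc₀
    (h.le_abs_M x hx y hy) (h.le_abs_M 0 h0 0 h0) (ht.trans hsmall) hr
  rw [show -2 * α 0 0 * l + -2 * (α x y - α 0 0) * l = -2 * α x y * l by ring] at key
  have hM' : |M x y - M 0 0| ≤ C * ν := by nlinarith
  calc _ ≤ _ := key
    _ ≤ C * exp (-2 * α 0 0 * l) * ((4 * (2 * C * ν) + ν) / c₀ + C * ν / c₀ ^ 2) := by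
        gcongr; exact h.abs_a_le
    _ = _ := by field_simp; ring

end CouplingHyp

lemma mul_exp_neg_mul_le {c l : ℝ} (h : l * exp (-(c / 2) * l) ≤ 1) :
    l * exp (-c * l) ≤ exp (-(c / 2) * l) := by
  have hsq : exp (-c * l) = exp (-(c / 2) * l) * exp (-(c / 2) * l) := by
    rw [← exp_add]; congr 1; ring
  rw [hsq, ← mul_assoc]
  exact mul_le_of_le_one_left (exp_pos _).le h

theorem eventually_exists_unique_solution {q ε c₀ η C α₀ : ℝ} {a r : ℝ → ℝ}
    {F M α : ℝ → ℝ → ℝ → ℝ} (hq0 : 0 ≤ q) (hq : q < 1) (hε : 0 < ε) (hc₀ : 0 < c₀)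
    (hη : 0 < η) (hC : 0 < C) (hα₀ : 0 < α₀)
    (h : ∀ᶠ l in atTop, CouplingHyp q ε c₀ η C α₀ l (a l) (r l) (F l) (M l) (α l)) :
    ∃ η' > 0, ∃ C' > 0, ∀ᶠ l in atTop, ∃ ψ μ : ℝ,
      (ψ ∈ Icc (-ε) ε ∧ μ ∈ Icc (-ε) ε) ∧
      (ψ = F l ψ μ ∧ a l * exp (-2 * α l ψ μ * l) * (1 + r l) = μ * M l ψ μ) ∧
      (∀ ψ' ∈ Icc (-ε) ε, ∀ μ' ∈ Icc (-ε) ε, ψ' = F l ψ' μ' →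
        a l * exp (-2 * α l ψ' μ' * l) * (1 + r l) = μ' * M l ψ' μ' → ψ' = ψ ∧ μ' = μ) ∧
      |μ - a l / M l 0 0 * exp (-2 * α l 0 0 * l)| ≤
        C' * exp (-2 * α l 0 0 * l) * exp (-η' * l) ∧
      |ψ| ≤ C' * exp (-η' * l) := by
  set η₁ := min η (2 * α₀)
  have hη₁ : 0 < η₁ := lt_min hη (by linarith)
  have h1q : 0 < 1 - q := by linarith
  set B := (C + C * (2 * C / c₀)) / (1 - q) + 2 * C / c₀
  set K := C * (8 * C + 1 + C / c₀) / c₀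
  refine ⟨η₁ / 2, by positivity, (K + 1) * (B + C), by positivity, ?_⟩
  filter_upwards [h, eventually_ge_atTop 1, eventually_mul_mul_exp_neg_lt hη₁ one_pos C,
    eventually_mul_mul_exp_neg_lt hη₁ hε (2 * C / c₀),
    eventually_mul_mul_exp_neg_lt hη₁ (by positivity : 0 < (1 - q) * ε) (C + C * (2 * C / c₀)),
    eventually_mul_mul_exp_neg_lt hη₁ one_pos
      (2 * C * (2 * C / c₀ + C / c₀ ^ 2) * (C / (1 - q) + 1)),
    eventually_mul_mul_exp_neg_lt hη₁ one_pos (2 * C * (B + C)),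
    eventually_mul_mul_exp_neg_lt (half_pos hη₁) one_pos 1]
    with l hl hl1 hr1 hρ hmaps hδ hsmall hdecay
  set E := exp (-η₁ * l)
  have hl0 : 0 ≤ l := by linarith
  have hEη : exp (-η * l) ≤ E := exp_le_exp.2 (by nlinarith [min_le_left η (2 * α₀)])
  have hEα : exp (-2 * α₀ * l) ≤ E := exp_le_exp.2 (by nlinarith [min_le_right η (2 * α₀)])
  have hrlE : |r l| ≤ C * (l * E) :=
    hl.abs_r_le.trans (by gcongr; exact hEη.trans (le_mul_of_one_le_left (exp_pos _).le hl1))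
  have hr : |r l| ≤ 1 := by linarith
  obtain ⟨ψ, hψ, μ, hμ, hFψ, hGμ, huniq⟩ := hl.exists_unique_fixedPt hq0 hq hc₀ hl1 hr hEη hEα hρ.le
    hmaps.le (by linarith)
  have hν : |ψ| + |μ| ≤ B * E := hl.abs_add_abs_le_of_fixedPt hq hc₀ hl0 hr hψ hμ hFψ hGμ hEη hEα
  have hlE0 : 0 ≤ l * E := by positivity
  have hBlE : 0 ≤ B * (l * E) := by positivity
  have hlν : l * (|ψ| + |μ|) ≤ (B + C) * (l * E) := by nlinarith [mul_le_mul_of_nonneg_left hν hl0]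
  have hdecay' : (B + C) * (l * E) ≤ (B + C) * exp (-(η₁ / 2) * l) := by
    gcongr; exact mul_exp_neg_mul_le (by linarith)
  have hK : 0 ≤ K := by positivity
  refine ⟨ψ, μ, ⟨hψ, hμ⟩, ⟨hFψ.symm, (couplingRhs_eq_iff (hl.M_ne_zero hc₀ hψ hμ)).1 hGμ⟩,
    fun ψ' hψ' μ' hμ' hF' hG' => huniq ψ' hψ' μ' hμ' hF'.symm
      ((couplingRhs_eq_iff (hl.M_ne_zero hc₀ hψ' hμ')).2 hG'), ?_, ?_⟩
  · rw [← hGμ]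
    calc _ ≤ K * exp (-2 * α l 0 0 * l) * ((B + C) * (l * E)) :=
          hl.abs_couplingRhs_sub_leading_le hc₀ hl1 hr hψ hμ hlν (by linarith) (by linarith)
      _ ≤ K * exp (-2 * α l 0 0 * l) * ((B + C) * exp (-(η₁ / 2) * l)) := by gcongr
      _ = K * (B + C) * exp (-2 * α l 0 0 * l) * exp (-(η₁ / 2) * l) := by ring
      _ ≤ (K + 1) * (B + C) * exp (-2 * α l 0 0 * l) * exp (-(η₁ / 2) * l) := by
          gcongr; linarith
  · calc |ψ| ≤ l * (|ψ| + |μ|) := by nlinarith [abs_nonneg ψ, abs_nonneg μ]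
      _ ≤ 1 * ((B + C) * exp (-(η₁ / 2) * l)) := by linarith
      _ ≤ (K + 1) * ((B + C) * exp (-(η₁ / 2) * l)) := by gcongr; linarith
      _ = (K + 1) * (B + C) * exp (-(η₁ / 2) * l) := by ring

theorem stmt_3_general (q l₀ ε₀ c₀ η C α₀ α₁ : ℝ)
    (hq : q ∈ Set.Ioo (0:ℝ) 1) (hε₀ : 0 < ε₀) (hc₀ : 0 < c₀) (hη : 0 < η) (hC : 0 < C)
    (hα₀ : 0 < α₀)
    (F M α : ℝ → ℝ → ℝ → ℝ)
    (Fψ Fl Mψ Ml αψ αl : ℝ → ℝ → ℝ → ℝ)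
    (a r : ℝ → ℝ)
    (hF : ∀ l ≥ l₀, ∀ ψ ∈ Set.Icc (-ε₀) ε₀, ∀ μ ∈ Set.Icc (-ε₀) ε₀,
      HasDerivAt (fun x => F l x μ) (Fψ l ψ μ) ψ ∧
      HasDerivAt (fun y => F l ψ y) (Fl l ψ μ) μ ∧
      |Fψ l ψ μ| ≤ q ∧ |Fl l ψ μ| ≤ C)
    (hF0 : ∀ l ≥ l₀, |F l 0 0| ≤ C * Real.exp (-η * l))
    (hM : ∀ l ≥ l₀, ∀ ψ ∈ Set.Icc (-ε₀) ε₀, ∀ μ ∈ Set.Icc (-ε₀) ε₀,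
      HasDerivAt (fun x => M l x μ) (Mψ l ψ μ) ψ ∧
      HasDerivAt (fun y => M l ψ y) (Ml l ψ μ) μ ∧
      c₀ ≤ |M l ψ μ| ∧ |M l ψ μ| ≤ C ∧ |Mψ l ψ μ| + |Ml l ψ μ| ≤ C)
    (ha : ∀ l ≥ l₀, 1 / C ≤ a l ∧ a l ≤ C)
    (hα : ∀ l ≥ l₀, ∀ ψ ∈ Set.Icc (-ε₀) ε₀, ∀ μ ∈ Set.Icc (-ε₀) ε₀,
      HasDerivAt (fun x => α l x μ) (αψ l ψ μ) ψ ∧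
      HasDerivAt (fun y => α l ψ y) (αl l ψ μ) μ ∧
      α l ψ μ ∈ Set.Icc α₀ α₁ ∧ |αψ l ψ μ| + |αl l ψ μ| ≤ C)
    (hr : ∀ l ≥ l₀, |r l| ≤ C * Real.exp (-η * l)) :
    ∃ l₁ ≥ l₀, ∃ η' > 0, ∃ C' > 0, ∃ ψs μs : ℝ → ℝ,
      ∀ l ≥ l₁,
        (ψs l ∈ Set.Icc (-ε₀) ε₀ ∧ μs l ∈ Set.Icc (-ε₀) ε₀) ∧
        (ψs l = F l (ψs l) (μs l) ∧
          a l * Real.exp (-2 * α l (ψs l) (μs l) * l) * (1 + r l)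
            = μs l * M l (ψs l) (μs l)) ∧
        (∀ ψ ∈ Set.Icc (-ε₀) ε₀, ∀ μ ∈ Set.Icc (-ε₀) ε₀,
          ψ = F l ψ μ →
          a l * Real.exp (-2 * α l ψ μ * l) * (1 + r l) = μ * M l ψ μ →
          ψ = ψs l ∧ μ = μs l) ∧
        |μs l - a l / M l 0 0 * Real.exp (-2 * α l 0 0 * l)| ≤
          C' * Real.exp (-2 * α l 0 0 * l) * Real.exp (-η' * l) ∧
        |ψs l| ≤ C' * Real.exp (-η' * l) := by
  have hyp : ∀ᶠ l in atTop, CouplingHyp q ε₀ c₀ η C α₀ l (a l) (r l) (F l) (M l) (α l) :=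
    eventually_atTop.2 ⟨l₀, fun l hl => CouplingHyp.of_hasDerivAt (hF l hl) (hF0 l hl) (hM l hl)
      (abs_le.2 ⟨by linarith [(ha l hl).1, one_div_pos.2 hC], (ha l hl).2⟩) (hα l hl) (hr l hl)⟩
  obtain ⟨η', hη', C', hC', hsol⟩ :=
    eventually_exists_unique_solution hq.1.le hq.2 hε₀ hc₀ hη hC hα₀ hyp
  obtain ⟨l₁, hl₁⟩ := eventually_atTop.1 hsol
  choose! ψs μs hψμ using hl₁
  exact ⟨max l₁ l₀, le_max_right _ _, η', hη', C', hC', ψs, μs,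
    fun l hl => hψμ l (le_of_max_le_left hl)⟩

/-- Unique solvability of the coupled system `ψ = F(l,ψ,λ)`,
`a(l) e^{−2α(l,ψ,λ) l}(1 + r(l)) = λ·M(l,ψ,λ)` near the origin, with exponential leading-order
formula for `λ*(l)` and exponentially small `ψ*(l)`. -/
theorem stmt_3 (q l₀ ε₀ c₀ η C α₀ α₁ : ℝ)
    (hq : q ∈ Set.Ioo (0:ℝ) 1) (hε₀ : 0 < ε₀) (hc₀ : 0 < c₀) (hη : 0 < η) (hC : 0 < C)
    (hα₀ : 0 < α₀) (hαα : α₀ ≤ α₁)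
    (F M α : ℝ → ℝ → ℝ → ℝ)
    (Fψ Fl Mψ Ml αψ αl : ℝ → ℝ → ℝ → ℝ)
    (a r : ℝ → ℝ)
    (hF : ∀ l ≥ l₀, ∀ ψ ∈ Set.Icc (-ε₀) ε₀, ∀ μ ∈ Set.Icc (-ε₀) ε₀,
      HasDerivAt (fun x => F l x μ) (Fψ l ψ μ) ψ ∧
      HasDerivAt (fun y => F l ψ y) (Fl l ψ μ) μ ∧
      |Fψ l ψ μ| ≤ q ∧ |Fl l ψ μ| ≤ C)
    (hF0 : ∀ l ≥ l₀, |F l 0 0| ≤ C * Real.exp (-η * l))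
    (hM : ∀ l ≥ l₀, ∀ ψ ∈ Set.Icc (-ε₀) ε₀, ∀ μ ∈ Set.Icc (-ε₀) ε₀,
      HasDerivAt (fun x => M l x μ) (Mψ l ψ μ) ψ ∧
      HasDerivAt (fun y => M l ψ y) (Ml l ψ μ) μ ∧
      c₀ ≤ |M l ψ μ| ∧ |M l ψ μ| ≤ C ∧ |Mψ l ψ μ| + |Ml l ψ μ| ≤ C)
    (ha : ∀ l ≥ l₀, 1 / C ≤ a l ∧ a l ≤ C)
    (hα : ∀ l ≥ l₀, ∀ ψ ∈ Set.Icc (-ε₀) ε₀, ∀ μ ∈ Set.Icc (-ε₀) ε₀,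
      HasDerivAt (fun x => α l x μ) (αψ l ψ μ) ψ ∧
      HasDerivAt (fun y => α l ψ y) (αl l ψ μ) μ ∧
      α l ψ μ ∈ Set.Icc α₀ α₁ ∧ |αψ l ψ μ| + |αl l ψ μ| ≤ C)
    (hr : ∀ l ≥ l₀, |r l| ≤ C * Real.exp (-η * l)) :
    ∃ l₁ ≥ l₀, ∃ η' > 0, ∃ C' > 0, ∃ ψs μs : ℝ → ℝ,
      ∀ l ≥ l₁,
        (ψs l ∈ Set.Icc (-ε₀) ε₀ ∧ μs l ∈ Set.Icc (-ε₀) ε₀) ∧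
        (ψs l = F l (ψs l) (μs l) ∧
          a l * Real.exp (-2 * α l (ψs l) (μs l) * l) * (1 + r l)
            = μs l * M l (ψs l) (μs l)) ∧
        (∀ ψ ∈ Set.Icc (-ε₀) ε₀, ∀ μ ∈ Set.Icc (-ε₀) ε₀,
          ψ = F l ψ μ →
          a l * Real.exp (-2 * α l ψ μ * l) * (1 + r l) = μ * M l ψ μ →
          ψ = ψs l ∧ μ = μs l) ∧
        |μs l - a l / M l 0 0 * Real.exp (-2 * α l 0 0 * l)| ≤
          C' * Real.exp (-2 * α l 0 0 * l) * Real.exp (-η' * l) ∧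
        |ψs l| ≤ C' * Real.exp (-η' * l) :=
  stmt_3_general q l₀ ε₀ c₀ η C α₀ α₁ hq hε₀ hc₀ hη hC hα₀ F M α Fψ Fl Mψ Ml αψ αl a r hF hF0 hM ha
    hα hr
end

section
/- Let P ⊂ ℝ^m be a nonempty compact set, let l₀ ∈ ℝ and b₀, η, C > 0. Suppose: (i) v = (v₁, v₂) : P → ℝ² is continuous; (ii) G : P × ℝ² → ℝ is continuous, C¹ in the ℝ²-variable y with ∂G/∂y jointly continuous, G(p, 0) = 0 for all p ∈ P, and |v₁(p) · ∂G/∂y₂(p, 0) − v₂(p) · ∂G/∂y₁(p, 0)| ≥ b₀ for all p ∈ P; (iii) s : [l₀, ∞) × P × ℝ² → ℝ is continuous, C¹ in y, with |s(l, p, y)| ≤ C e^{−η l} and |∂s/∂y(l, p, y)| ≤ C e^{−η l}. Then there exist ε₀ > 0, l₁ ≥ l₀ and C' > 0 such that for every l ≥ l₁ and every p ∈ P the system v₁(p) y₁ + v₂(p) y₂ = 0 and G(p, y) = s(l, p, y) has exactly one solution y = y*(l, p) with |y| ≤ ε₀, and this solution satisfies |y*(l, p)| ≤ C' e^{−η l}.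 -/
open Set Real
open Filter Topology

/-!
On the line `v₁(p) y₁ + v₂(p) y₂ = 0`, parametrised by arclength as `t ↦ t • e(p)`, the system
becomes the scalar equation `g(t) = G(p, t e) - s(l, p, t e) = 0`. The nondegeneracy condition
says `|∂_y G(p, 0) e| ≥ b₀ / ‖v(p)‖`, and by compactness of `P` this lower bound, as well as the
modulus of continuity of `∂_y G` at `y = 0`, is uniform in `p`; the derivative of `s` is
`O(e^{-η l})`. Hence on a fixed interval `|t| ≤ ε` the derivative `g'` stays within `c` of a
number `a` with `|a| ≥ 2c`, so `|g t - g u| ≥ c |t - u|`: this gives uniqueness and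
`|t*| ≤ |g 0| / c = O(e^{-η l})`, while existence follows from the intermediate value theorem
once `|g 0| ≤ c ε`.
-/

section Scalar

variable {g g' : ℝ → ℝ} {a κ ρ : ℝ}

theorem abs_sub_sub_mul_sub_le_of_abs_deriv_sub_le
    (hg : ∀ t, |t| ≤ ρ → HasDerivAt g (g' t) t) (hg' : ∀ t, |t| ≤ ρ → |g' t - a| ≤ κ)
    {x y : ℝ} (hx : |x| ≤ ρ) (hy : |y| ≤ ρ) :
    |g y - g x - a * (y - x)| ≤ κ * |y - x| := by
  have key := (convex_closedBall (0 : ℝ) ρ).norm_image_sub_le_of_norm_hasDerivWithin_le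
    (f := fun t => g t - a * t) (f' := fun t => g' t - a) (C := κ)
    (fun t ht => (((hg t (by simpa using ht)).sub ((hasDerivAt_id t).const_mul a)).congr_deriv
      (by simp)).hasDerivWithinAt)
    (fun t ht => hg' t (by simpa using ht)) (by simpa using hx) (by simpa using hy)
  simp only [Real.norm_eq_abs] at key
  convert key using 2
  ring

theorem mul_abs_sub_le_abs_sub_of_abs_deriv_sub_le
    (hg : ∀ t, |t| ≤ ρ → HasDerivAt g (g' t) t) (hg' : ∀ t, |t| ≤ ρ → |g' t - a| ≤ κ)
    {x y : ℝ} (hx : |x| ≤ ρ) (hy : |y| ≤ ρ) :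
    (|a| - κ) * |y - x| ≤ |g y - g x| := by
  have h := abs_sub_sub_mul_sub_le_of_abs_deriv_sub_le hg hg' hx hy
  have h' := abs_sub_abs_le_abs_sub (a * (y - x)) (g y - g x)
  rw [abs_sub_comm (a * (y - x)), abs_mul] at h'
  linarith

theorem exists_abs_le_eq_zero_of_abs_deriv_sub_le (hρ : 0 ≤ ρ)
    (hg : ∀ t, |t| ≤ ρ → HasDerivAt g (g' t) t) (hg' : ∀ t, |t| ≤ ρ → |g' t - a| ≤ κ)
    (h0 : |g 0| ≤ (|a| - κ) * ρ) :
    ∃ t, |t| ≤ ρ ∧ g t = 0 := by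
  have hρ' : |ρ| ≤ ρ := (abs_of_nonneg hρ).le
  have hmρ : |-ρ| ≤ ρ := by rw [abs_neg]; exact hρ'
  have h0ρ : |(0 : ℝ)| ≤ ρ := by simpa using hρ
  have hplus := abs_sub_sub_mul_sub_le_of_abs_deriv_sub_le hg hg' h0ρ hρ'
  have hminus := abs_sub_sub_mul_sub_le_of_abs_deriv_sub_le hg hg' h0ρ hmρ
  simp only [sub_zero, abs_neg, abs_of_nonneg hρ] at hplus hminus
  have hcont : ContinuousOn g (uIcc (-ρ) ρ) := fun t ht =>
    (hg t (abs_le.2 (by simpa [uIcc_of_le (neg_le_self hρ)] using ht))).continuousAt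
      |>.continuousWithinAt
  -- `g (±ρ)` lies within `κ ρ` of `g 0 ± a ρ`, hence has the sign of `± a`.
  have hsign : 0 ∈ uIcc (g (-ρ)) (g ρ) := by
    rcases abs_le.1 h0 with ⟨h0l, h0r⟩
    rcases abs_le.1 hplus with ⟨hpl, hpr⟩
    rcases abs_le.1 hminus with ⟨hml, hmr⟩
    rcases le_total 0 a with ha | ha
    · rw [abs_of_nonneg ha] at h0l h0r
      exact mem_uIcc_of_le (by nlinarith) (by nlinarith)
    · rw [abs_of_nonpos ha] at h0l h0r
      exact mem_uIcc_of_ge (by nlinarith) (by nlinarith)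
  obtain ⟨t, ht, hgt⟩ := intermediate_value_uIcc hcont hsign
  rw [uIcc_of_le (neg_le_self hρ)] at ht
  exact ⟨t, abs_le.2 ht, hgt⟩

end Scalar

theorem exists_unique_zero_smul_of_norm_fderiv_sub_le {E : Type*} [NormedAddCommGroup E]
    [NormedSpace ℝ E] {F : E → ℝ} {F' : E → E →L[ℝ] ℝ} {L : E →L[ℝ] ℝ} {e : E} {κ ρ : ℝ}
    (he : ‖e‖ = 1) (hρ : 0 ≤ ρ)
    (hF : ∀ y, ‖y‖ ≤ ρ → HasFDerivAt F (F' y) y) (hF' : ∀ y, ‖y‖ ≤ ρ → ‖F' y - L‖ ≤ κ)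
    (hκ : κ < |L e|) (h0 : |F 0| ≤ (|L e| - κ) * ρ) :
    ∃ t, |t| ≤ ρ ∧ F (t • e) = 0 ∧ (|L e| - κ) * |t| ≤ |F 0| ∧
      ∀ u, |u| ≤ ρ → F (u • e) = 0 → u = t := by
  have hnorm : ∀ t : ℝ, ‖t • e‖ = |t| := by simp [norm_smul, he]
  have hg : ∀ t, |t| ≤ ρ → HasDerivAt (fun t : ℝ => F (t • e)) (F' (t • e) e) t :=
    fun t ht => (hF _ (by rwa [hnorm])).comp_hasDerivAt t
      (by simpa using (hasDerivAt_id t).smul_const e)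
  have hg' : ∀ t, |t| ≤ ρ → |F' (t • e) e - L e| ≤ κ := fun t ht =>
    calc |F' (t • e) e - L e| = ‖(F' (t • e) - L) e‖ := by simp
      _ ≤ ‖F' (t • e) - L‖ * ‖e‖ := (F' (t • e) - L).le_opNorm e
      _ ≤ κ := by rw [he, mul_one]; exact hF' _ (by rwa [hnorm])
  have h0ρ : |(0 : ℝ)| ≤ ρ := by simpa using hρ
  obtain ⟨t, ht, hFt⟩ := exists_abs_le_eq_zero_of_abs_deriv_sub_le hρ hg hg' (by simpa using h0)
  refine ⟨t, ht, hFt, ?_, fun u hu hFu => ?_⟩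
  · simpa [hFt] using mul_abs_sub_le_abs_sub_of_abs_deriv_sub_le hg hg' h0ρ ht
  have hut := mul_abs_sub_le_abs_sub_of_abs_deriv_sub_le hg hg' ht hu
  rw [hFu, hFt, sub_self, abs_zero] at hut
  exact sub_eq_zero.1 (abs_nonpos_iff.1 (nonpos_of_mul_nonpos_right hut (sub_pos.2 hκ)))

theorem exists_eq_smul_of_mul_add_mul_eq_zero {a b : ℝ} {z : ℝ × ℝ} (hab : (a, b) ≠ 0)
    (hz : a * z.1 + b * z.2 = 0) : ∃ u : ℝ, z = u • ((b, -a) : ℝ × ℝ) := by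
  have hn : a ^ 2 + b ^ 2 ≠ 0 := by
    contrapose! hab
    have ha : a = 0 := by nlinarith [sq_nonneg a, sq_nonneg b]
    have hb : b = 0 := by nlinarith [sq_nonneg a, sq_nonneg b]
    simp [ha, hb]
  refine ⟨(b * z.1 - a * z.2) / (a ^ 2 + b ^ 2), Prod.ext ?_ ?_⟩ <;>
    simp only [Prod.smul_fst, Prod.smul_snd, smul_eq_mul]
  · field_simp
    linear_combination a * hz
  · field_simp
    linear_combination b * hz

theorem exists_unique_eq_on_line {a b c ε : ℝ} {G s : ℝ × ℝ → ℝ}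
    {G' s' : ℝ × ℝ → ℝ × ℝ →L[ℝ] ℝ} (hab : (a, b) ≠ 0) (hc : 0 < c) (hε : 0 ≤ ε)
    (hnd : 2 * c * ‖(a, b)‖ ≤ |a * G' 0 (0, 1) - b * G' 0 (1, 0)|)
    (hG : ∀ y, ‖y‖ ≤ ε → HasFDerivAt G (G' y) y) (hs : ∀ y, ‖y‖ ≤ ε → HasFDerivAt s (s' y) y)
    (hG' : ∀ y, ‖y‖ ≤ ε → ‖G' y - G' 0‖ ≤ c / 2) (hs' : ∀ y, ‖y‖ ≤ ε → ‖s' y‖ ≤ c / 2)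
    (hG0 : G 0 = 0) (hs0 : |s 0| ≤ c * ε) :
    ∃ y, ‖y‖ ≤ ε ∧ a * y.1 + b * y.2 = 0 ∧ G y = s y ∧ c * ‖y‖ ≤ |s 0| ∧
      ∀ z, ‖z‖ ≤ ε → a * z.1 + b * z.2 = 0 → G z = s z → z = y := by
  set w : ℝ × ℝ := (b, -a)
  have hw : ‖w‖ = ‖(a, b)‖ := by simp [w, max_comm]
  have hw0 : 0 < ‖w‖ := hw ▸ norm_pos_iff.2 hab
  set e := ‖w‖⁻¹ • w
  have he : ‖e‖ = 1 := norm_smul_inv_norm (norm_pos_iff.1 hw0)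
  have hnorm : ∀ t : ℝ, ‖t • e‖ = |t| := by simp [norm_smul, he]
  have hLe : 2 * c ≤ |G' 0 e| := by
    have hLw : G' 0 w = -(a * G' 0 (0, 1) - b * G' 0 (1, 0)) := by
      have : w = b • ((1 : ℝ), (0 : ℝ)) + (-a) • ((0 : ℝ), (1 : ℝ)) := by ext <;> simp [w]
      rw [this, map_add, map_smul, map_smul, smul_eq_mul, smul_eq_mul]
      ring
    rw [map_smul, smul_eq_mul, hLw, abs_mul, abs_neg, abs_inv, abs_norm, le_inv_mul_iff₀ hw0, hw]
    linarith
  have hF' : ∀ y, ‖y‖ ≤ ε → ‖(G' y - s' y) - G' 0‖ ≤ c := fun y hy =>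
    calc ‖(G' y - s' y) - G' 0‖ = ‖(G' y - G' 0) - s' y‖ := by abel_nf
      _ ≤ ‖G' y - G' 0‖ + ‖s' y‖ := norm_sub_le _ _
      _ ≤ c := by linarith [hG' y hy, hs' y hy]
  obtain ⟨t, ht, hFt, hbound, huniq⟩ := exists_unique_zero_smul_of_norm_fderiv_sub_le
    (F := fun y => G y - s y) he hε (fun y hy => (hG y hy).sub (hs y hy)) hF' (by linarith)
    (by
      rw [hG0, zero_sub, abs_neg]
      exact hs0.trans (mul_le_mul_of_nonneg_right (by linarith) hε))
  simp only [hG0, zero_sub, abs_neg] at hbound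
  refine ⟨t • e, by rwa [hnorm], by simp [e, w]; ring, sub_eq_zero.1 hFt, ?_, ?_⟩
  · rw [hnorm]
    nlinarith [abs_nonneg t]
  · intro z hz hza hzG
    obtain ⟨u, rfl⟩ := exists_eq_smul_of_mul_add_mul_eq_zero hab hza
    have hue : u • w = (u * ‖w‖) • e := by
      rw [smul_smul, mul_assoc, mul_inv_cancel₀ hw0.ne', mul_one]
    rw [hue, hnorm] at hz
    rw [hue] at hzG ⊢
    rw [huniq _ hz (sub_eq_zero.2 hzG)]

theorem IsCompact.exists_pos_forall_dist_apply_zero_le {α E F : Type*} [PseudoMetricSpace α]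
    [NormedAddCommGroup E] [ProperSpace E] [PseudoMetricSpace F] {P : Set α} (hP : IsCompact P)
    {f : α → E → F} (hf : ContinuousOn (fun q : α × E => f q.1 q.2) (P ×ˢ univ))
    {κ : ℝ} (hκ : 0 < κ) :
    ∃ ε > 0, ∀ p ∈ P, ∀ y, ‖y‖ ≤ ε → dist (f p y) (f p 0) ≤ κ := by
  have hK : IsCompact (P ×ˢ Metric.closedBall (0 : E) 1) := hP.prod (isCompact_closedBall 0 1)
  obtain ⟨δ, hδ, hfδ⟩ := Metric.uniformContinuousOn_iff.1
    (hK.uniformContinuousOn_of_continuous (hf.mono (prod_mono subset_rfl (subset_univ _)))) κ hκ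
  refine ⟨min (δ / 2) 1, by positivity, fun p hp y hy => (hfδ (p, y) ?_ (p, 0) ?_ ?_).le⟩
  · exact ⟨hp, mem_closedBall_zero_iff.2 (hy.trans (min_le_right _ _))⟩
  · exact ⟨hp, Metric.mem_closedBall_self zero_le_one⟩
  · rw [Prod.dist_eq, dist_self, dist_zero_right]
    exact max_lt hδ (hy.trans_lt ((min_le_left _ _).trans_lt (half_lt_self hδ)))

theorem exists_forall_ge_mul_exp_neg_mul_le (l₀ C : ℝ) {η δ : ℝ} (hη : 0 < η) (hδ : 0 < δ) :
    ∃ l₁ ≥ l₀, ∀ l ≥ l₁, C * exp (-η * l) ≤ δ := by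
  have hdecay : Tendsto (fun l => C * exp (-η * l)) atTop (𝓝 0) := by
    simpa using (tendsto_exp_comp_nhds_zero.2
      (tendsto_neg_atTop_atBot.comp (tendsto_id.const_mul_atTop hη))).const_mul C
  obtain ⟨l₁, hl₁⟩ := eventually_atTop.1 (hdecay.eventually (ge_mem_nhds hδ))
  exact ⟨max l₀ l₁, le_max_left _ _, fun l hl => hl₁ l (le_of_max_le_right hl)⟩

theorem stmt_6_general (m : ℕ) (P : Set (Fin m → ℝ)) (hP : IsCompact P)
    (l₀ b₀ η C : ℝ) (hb₀ : 0 < b₀) (hη : 0 < η) (hC : 0 < C)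
    (v1 v2 : (Fin m → ℝ) → ℝ)
    (hv1 : ContinuousOn v1 P) (hv2 : ContinuousOn v2 P)
    (G : (Fin m → ℝ) → ℝ × ℝ → ℝ)
    (G' : (Fin m → ℝ) → ℝ × ℝ → (ℝ × ℝ →L[ℝ] ℝ))
    (hGdiff : ∀ p ∈ P, ∀ y : ℝ × ℝ, HasFDerivAt (G p) (G' p y) y)
    (hG'cont : ContinuousOn (fun pq : (Fin m → ℝ) × (ℝ × ℝ) => G' pq.1 pq.2)
      (P ×ˢ (Set.univ : Set (ℝ × ℝ))))
    (hG0 : ∀ p ∈ P, G p 0 = 0)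
    (hnd : ∀ p ∈ P, b₀ ≤ |v1 p * G' p 0 ((0 : ℝ), (1 : ℝ)) - v2 p * G' p 0 ((1 : ℝ), (0 : ℝ))|)
    (s : ℝ → (Fin m → ℝ) → ℝ × ℝ → ℝ)
    (s' : ℝ → (Fin m → ℝ) → ℝ × ℝ → (ℝ × ℝ →L[ℝ] ℝ))
    (hs : ∀ l ≥ l₀, ∀ p ∈ P, ∀ y : ℝ × ℝ, |s l p y| ≤ C * Real.exp (-η * l))
    (hs' : ∀ l ≥ l₀, ∀ p ∈ P, ∀ y : ℝ × ℝ,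
      HasFDerivAt (s l p) (s' l p y) y ∧ ‖s' l p y‖ ≤ C * Real.exp (-η * l)) :
    ∃ ε₀ > 0, ∃ l₁ ≥ l₀, ∃ C' > 0, ∃ ys : ℝ → (Fin m → ℝ) → ℝ × ℝ,
      ∀ l ≥ l₁, ∀ p ∈ P,
        ‖ys l p‖ ≤ ε₀ ∧
        v1 p * (ys l p).1 + v2 p * (ys l p).2 = 0 ∧
        G p (ys l p) = s l p (ys l p) ∧
        (∀ y : ℝ × ℝ, ‖y‖ ≤ ε₀ → v1 p * y.1 + v2 p * y.2 = 0 →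
          G p y = s l p y → y = ys l p) ∧
        ‖ys l p‖ ≤ C' * Real.exp (-η * l) := by
  obtain ⟨M, hM⟩ := hP.exists_bound_of_continuousOn (hv1.prodMk hv2)
  set c := b₀ / (2 * max M 1)
  have hc : 0 < c := by positivity
  obtain ⟨ε, hε, hG'ε⟩ := hP.exists_pos_forall_dist_apply_zero_le hG'cont (half_pos hc)
  obtain ⟨l₁, hl₁, hsmall⟩ :=
    exists_forall_ge_mul_exp_neg_mul_le l₀ C hη (lt_min (half_pos hc) (mul_pos hc hε))
  have key : ∀ l ≥ l₁, ∀ p ∈ P, ∃ y, ‖y‖ ≤ ε ∧ v1 p * y.1 + v2 p * y.2 = 0 ∧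
      G p y = s l p y ∧ c * ‖y‖ ≤ |s l p 0| ∧
      ∀ z, ‖z‖ ≤ ε → v1 p * z.1 + v2 p * z.2 = 0 → G p z = s l p z → z = y := by
    intro l hl p hp
    have hl₀ : l ≥ l₀ := hl₁.trans hl
    obtain ⟨hs'small, hs0small⟩ := le_min_iff.1 (hsmall l hl)
    have hab : (v1 p, v2 p) ≠ 0 := fun h => by
      simpa [(Prod.mk_eq_zero.1 h).1, (Prod.mk_eq_zero.1 h).2] using hb₀.trans_le (hnd p hp)
    refine exists_unique_eq_on_line hab hc hε.le ?_ (fun y _ => hGdiff p hp y)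
      (fun y _ => (hs' l hl₀ p hp y).1) (fun y hy => by simpa [dist_eq_norm] using hG'ε p hp y hy)
      (fun y _ => (hs' l hl₀ p hp y).2.trans hs'small) (hG0 p hp) ((hs l hl₀ p hp 0).trans hs0small)
    calc 2 * c * ‖(v1 p, v2 p)‖ ≤ 2 * c * max M 1 := by
          gcongr; exact (hM p hp).trans (le_max_left _ _)
      _ = b₀ := by simp only [c]; field_simp
      _ ≤ _ := hnd p hp
  choose! ys hys using key
  refine ⟨ε, hε, l₁, hl₁, C / c, by positivity, ys, fun l hl p hp => ?_⟩
  obtain ⟨hε, hline, hsol, hbound, huniq⟩ := hys l hl p hp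
  refine ⟨hε, hline, hsol, huniq, ?_⟩
  rw [div_mul_eq_mul_div, le_div_iff₀ hc, mul_comm]
  exact hbound.trans (hs l (hl₁.trans hl) p hp 0)

/-- Unique solvability, near the origin, of the system consisting of the normality constraint
`v₁(p) y₁ + v₂(p) y₂ = 0` and the equation `G(p,y) = s(l,p,y)` with exponentially small
right-hand side, with solution `y*(l,p) = O(e^{−η l})`. -/
theorem stmt_6 (m : ℕ) (P : Set (Fin m → ℝ)) (hP : IsCompact P) (hPne : P.Nonempty)
    (l₀ b₀ η C : ℝ) (hb₀ : 0 < b₀) (hη : 0 < η) (hC : 0 < C)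
    (v1 v2 : (Fin m → ℝ) → ℝ)
    (hv1 : ContinuousOn v1 P) (hv2 : ContinuousOn v2 P)
    (G : (Fin m → ℝ) → ℝ × ℝ → ℝ)
    (G' : (Fin m → ℝ) → ℝ × ℝ → (ℝ × ℝ →L[ℝ] ℝ))
    (hGcont : ContinuousOn (fun pq : (Fin m → ℝ) × (ℝ × ℝ) => G pq.1 pq.2)
      (P ×ˢ (Set.univ : Set (ℝ × ℝ))))
    (hGdiff : ∀ p ∈ P, ∀ y : ℝ × ℝ, HasFDerivAt (G p) (G' p y) y)
    (hG'cont : ContinuousOn (fun pq : (Fin m → ℝ) × (ℝ × ℝ) => G' pq.1 pq.2)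
      (P ×ˢ (Set.univ : Set (ℝ × ℝ))))
    (hG0 : ∀ p ∈ P, G p 0 = 0)
    (hnd : ∀ p ∈ P, b₀ ≤ |v1 p * G' p 0 ((0 : ℝ), (1 : ℝ)) - v2 p * G' p 0 ((1 : ℝ), (0 : ℝ))|)
    (s : ℝ → (Fin m → ℝ) → ℝ × ℝ → ℝ)
    (s' : ℝ → (Fin m → ℝ) → ℝ × ℝ → (ℝ × ℝ →L[ℝ] ℝ))
    (hscont : ∀ l ≥ l₀, ContinuousOn (fun pq : (Fin m → ℝ) × (ℝ × ℝ) => s l pq.1 pq.2)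
      (P ×ˢ (Set.univ : Set (ℝ × ℝ))))
    (hs : ∀ l ≥ l₀, ∀ p ∈ P, ∀ y : ℝ × ℝ, |s l p y| ≤ C * Real.exp (-η * l))
    (hs' : ∀ l ≥ l₀, ∀ p ∈ P, ∀ y : ℝ × ℝ,
      HasFDerivAt (s l p) (s' l p y) y ∧ ‖s' l p y‖ ≤ C * Real.exp (-η * l)) :
    ∃ ε₀ > 0, ∃ l₁ ≥ l₀, ∃ C' > 0, ∃ ys : ℝ → (Fin m → ℝ) → ℝ × ℝ,
      ∀ l ≥ l₁, ∀ p ∈ P,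
        ‖ys l p‖ ≤ ε₀ ∧
        v1 p * (ys l p).1 + v2 p * (ys l p).2 = 0 ∧
        G p (ys l p) = s l p (ys l p) ∧
        (∀ y : ℝ × ℝ, ‖y‖ ≤ ε₀ → v1 p * y.1 + v2 p * y.2 = 0 →
          G p y = s l p y → y = ys l p) ∧
        ‖ys l p‖ ≤ C' * Real.exp (-η * l) :=
  stmt_6_general m P hP l₀ b₀ η C hb₀ hη hC v1 v2 hv1 hv2 G G' hGdiff hG'cont hG0 hnd s s' hs hs'
end

section
/- Let Z : ℝ → ℝ be a C², 2π-periodic function such that whenever Z'(φ) = 0 one has Z''(φ) ≠ 0. Let 0 < c₁ ≤ c₂, K > 0, L₀ ∈ ℝ, and let Φ : [L₀, ∞) → ℝ be C² with c₁ ≤ Φ'(L) ≤ c₂ and |Φ''(L)| ≤ K for all L. Let η, C > 0 and let ρ : [L₀, ∞) → ℝ be C² with |ρ(L)|, |ρ'(L)|, |ρ''(L)| ≤ C e^{−η L}. Define λ₂(L) := Z(Φ(L)) + ρ(L). Then there exist L₁ ≥ L₀ and ε > 0 such that: (i) for every L* ≥ L₁ with Z'(Φ(L*)) = 0, the derivative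 λ₂' has exactly one zero L̂ in the interval (L* − ε, L* + ε), and λ₂''(L̂) ≠ 0; (ii) every zero of λ₂' in [L₁ + ε, ∞) lies within distance ε of some L* with Z'(Φ(L*)) = 0. -/
/-!
By periodicity, `Z` is uniformly controlled: `|Z'| + |Z''| ≥ m > 0` everywhere and `Z'`, `Z''` are
uniformly continuous. Near a point `L*` with `Z'(Φ L*) = 0`,
`λ₂'' = Z''(Φ) Φ'² + Z'(Φ) Φ'' + ρ''` therefore stays away from `0`, while `λ₂'(L*) = ρ'(L*)` is
exponentially small; so `λ₂'` is strictly monotone near `L*` and has exactly one zero there.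
Conversely, at a zero `L` of `λ₂'` the value `Z'(Φ L) = -ρ'(L) / Φ'(L)` is tiny, so `Z''` is bounded
away from `0` near `Φ L` and `Z'` vanishes within `c₁ ε` of `Φ L`, a value that `Φ` attains within
`ε` of `L`.
-/

open Set Real Filter Topology

theorem Function.Periodic.deriv {f : ℝ → ℝ} {c : ℝ} (hp : Function.Periodic f c) :
    Function.Periodic (_root_.deriv f) c := fun x => by
  rw [← deriv_comp_add_const, funext hp]

theorem Function.Periodic.uniformContinuous_of_continuous {β : Type*} [UniformSpace β]
    {f : ℝ → β} {c : ℝ} (hp : Function.Periodic f c) (hc : 0 < c) (hf : Continuous f) :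
    UniformContinuous f := by
  have : Fact (0 < c) := ⟨hc⟩
  have hlift : Continuous (hp.lift : AddCircle c → β) := continuous_quot_lift _ hf
  exact (CompactSpace.uniformContinuous_of_continuous hlift).comp
    (uniformContinuous_addMonoidHom_of_continuous (f := QuotientAddGroup.mk' _)
      continuous_quotient_mk')

theorem Function.Periodic.exists_pos_forall_le {f : ℝ → ℝ} {c : ℝ} (hp : Function.Periodic f c)
    (hc : c ≠ 0) (hf : Continuous f) (hpos : ∀ x, 0 < f x) : ∃ m > 0, ∀ x, m ≤ f x := by
  obtain ⟨_, ⟨y, rfl⟩, hy⟩ := (hp.compact_of_continuous hc hf).exists_isLeast (range_nonempty f)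
  exact ⟨f y, hpos y, fun x => hy ⟨x, rfl⟩⟩

theorem exists_pos_le_abs_deriv_add_abs_deriv_deriv {Z : ℝ → ℝ} {c : ℝ} (hZ : ContDiff ℝ 2 Z)
    (hper : Function.Periodic Z c) (hc : c ≠ 0)
    (hnd : ∀ φ, deriv Z φ = 0 → deriv (deriv Z) φ ≠ 0) :
    ∃ m > 0, ∀ φ, m ≤ |deriv Z φ| + |deriv (deriv Z) φ| := by
  have hper' : Function.Periodic (fun φ => |deriv Z φ| + |deriv (deriv Z) φ|) c := fun φ => by
    simp only [hper.deriv φ, hper.deriv.deriv φ]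
  refine hper'.exists_pos_forall_le hc
    ((hZ.continuous_deriv (by norm_num)).abs.add
      ((hZ.deriv' (n := 1)).continuous_deriv le_rfl).abs) fun φ => ?_
  by_cases h : deriv Z φ = 0
  · simpa [h] using hnd φ h
  · positivity

theorem existsUnique_mem_Ioo_eq_zero_of_le_deriv {g : ℝ → ℝ} {a r α : ℝ} (hα : 0 < α)
    (hg : ∀ x ∈ Icc (a - r) (a + r), DifferentiableAt ℝ g x)
    (hg' : ∀ x ∈ Icc (a - r) (a + r), α ≤ deriv g x) (ha : |g a| < α * r) :
    ∃! x, x ∈ Ioo (a - r) (a + r) ∧ g x = 0 := by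
  have hr : 0 < r := pos_of_mul_pos_right ((abs_nonneg _).trans_lt ha) hα.le
  have hcont : ContinuousOn g (Icc (a - r) (a + r)) :=
    fun x hx => (hg x hx).continuousAt.continuousWithinAt
  have hgrow := (convex_Icc _ _).mul_sub_le_image_sub_of_le_deriv hcont
    (fun x hx => (hg x (interior_subset hx)).differentiableWithinAt)
    fun x hx => hg' x (interior_subset hx)
  have hmono : StrictMonoOn g (Icc (a - r) (a + r)) :=
    strictMonoOn_of_deriv_pos (convex_Icc _ _) hcont
      fun x hx => hα.trans_le (hg' x (interior_subset hx))
  have hleft : α * r ≤ g a - g (a - r) := by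
    simpa using hgrow (a - r) ⟨le_rfl, by linarith⟩ a ⟨by linarith, by linarith⟩ (by linarith)
  have hright : α * r ≤ g (a + r) - g a := by
    simpa using hgrow a ⟨by linarith, by linarith⟩ (a + r) ⟨by linarith, le_rfl⟩ (by linarith)
  obtain ⟨x, hx, hx0⟩ := intermediate_value_Ioo (by linarith : a - r ≤ a + r) hcont
    (show (0 : ℝ) ∈ Ioo (g (a - r)) (g (a + r)) from
      ⟨by linarith [abs_lt.mp ha], by linarith [abs_lt.mp ha]⟩)
  exact ⟨x, ⟨hx, hx0⟩, fun y ⟨hy, hy0⟩ =>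
    hmono.injOn (Ioo_subset_Icc_self hy) (Ioo_subset_Icc_self hx) (hy0.trans hx0.symm)⟩

theorem existsUnique_mem_Ioo_eq_zero_of_le_abs_deriv {g : ℝ → ℝ} {a r α : ℝ} (hα : 0 < α)
    (hg : ∀ x ∈ Icc (a - r) (a + r), DifferentiableAt ℝ g x)
    (hg' : ∀ x ∈ Icc (a - r) (a + r), α ≤ |deriv g x|) (ha : |g a| < α * r) :
    ∃! x, x ∈ Ioo (a - r) (a + r) ∧ g x = 0 := by
  rcases hasDerivWithinAt_forall_lt_or_forall_gt_of_forall_ne (convex_Icc _ _)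
    (fun x hx => (hg x hx).hasDerivAt.hasDerivWithinAt) (m := 0)
    (fun x hx h => by simpa [h] using hα.trans_le (hg' x hx)) with hneg | hpos
  · have := existsUnique_mem_Ioo_eq_zero_of_le_deriv hα (fun x hx => (hg x hx).neg)
      (fun x hx => by simpa [deriv.neg', abs_of_neg (hneg x hx)] using hg' x hx)
      (by simpa using ha)
    simpa using this
  · exact existsUnique_mem_Ioo_eq_zero_of_le_deriv hα hg
      (fun x hx => by simpa [abs_of_pos (hpos x hx)] using hg' x hx) ha

theorem eventually_abs_lt_of_abs_le_mul_exp {f : ℝ → ℝ} {C η L₀ t : ℝ} (hη : 0 < η) (ht : 0 < t)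
    (hf : ∀ L ≥ L₀, |f L| ≤ C * exp (-η * L)) : ∀ᶠ L in atTop, |f L| < t := by
  have hdecay : Tendsto (fun L => C * exp (-η * L)) atTop (𝓝 0) := by
    simpa using ((tendsto_exp_atBot.comp
      (tendsto_id.const_mul_atTop_of_neg (neg_lt_zero.mpr hη))).const_mul C)
  filter_upwards [hdecay.eventually (gt_mem_nhds ht), eventually_ge_atTop L₀] with L hL hL₀
  exact (hf L hL₀).trans_lt hL

section Snaking

variable {Z Φ ρ : ℝ → ℝ}

theorem deriv_comp_add (hZ : Differentiable ℝ Z) (hΦ : Differentiable ℝ Φ)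
    (hρ : Differentiable ℝ ρ) :
    deriv (fun L => Z (Φ L) + ρ L) = fun L => deriv Z (Φ L) * deriv Φ L + deriv ρ L :=
  funext fun L => (((hZ _).hasDerivAt.comp L (hΦ L).hasDerivAt).add (hρ L).hasDerivAt).deriv

theorem deriv_deriv_comp_add (hZ : ContDiff ℝ 2 Z) (hΦ : ContDiff ℝ 2 Φ) (hρ : ContDiff ℝ 2 ρ)
    (L : ℝ) : deriv (deriv (fun L => Z (Φ L) + ρ L)) L =
      deriv (deriv Z) (Φ L) * deriv Φ L ^ 2 + deriv Z (Φ L) * deriv (deriv Φ) L +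
        deriv (deriv ρ) L := by
  rw [deriv_comp_add (hZ.differentiable (by norm_num)) (hΦ.differentiable (by norm_num))
    (hρ.differentiable (by norm_num))]
  refine ((((hZ.differentiable_deriv_two _).hasDerivAt.comp L
    (hΦ.differentiable (by norm_num) L).hasDerivAt).mul
    (hΦ.differentiable_deriv_two L).hasDerivAt).add
    (hρ.differentiable_deriv_two L).hasDerivAt).deriv.trans ?_
  simp only [Function.comp_apply]
  ring

variable {m c₁ c₂ K e δ ε Ls : ℝ}

theorem le_abs_deriv_deriv_comp_add (hZ : ContDiff ℝ 2 Z) (hΦ : ContDiff ℝ 2 Φ)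
    (hρ : ContDiff ℝ 2 ρ) (hc₁ : 0 < c₁) (hm : ∀ φ, m ≤ |deriv Z φ| + |deriv (deriv Z) φ|)
    (hZ'δ : ∀ ⦃x y⦄, dist x y < δ → dist (deriv Z x) (deriv Z y) < e)
    (hZ''δ : ∀ ⦃x y⦄, dist x y < δ → dist (deriv (deriv Z) x) (deriv (deriv Z) y) < m / 4)
    (heK : e * K ≤ m * c₁ ^ 2 / 4) (hεδ : c₂ * ε < δ)
    (hΦ' : ∀ L ∈ Icc (Ls - ε) (Ls + ε),
      c₁ ≤ deriv Φ L ∧ deriv Φ L ≤ c₂ ∧ |deriv (deriv Φ) L| ≤ K)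
    (hρ'' : ∀ L ∈ Icc (Ls - ε) (Ls + ε), |deriv (deriv ρ) L| < m * c₁ ^ 2 / 4)
    (hcrit : deriv Z (Φ Ls) = 0) :
    ∀ L ∈ Icc (Ls - ε) (Ls + ε),
      m * c₁ ^ 2 / 4 ≤ |deriv (deriv (fun L => Z (Φ L) + ρ L)) L| := by
  intro L hL
  obtain ⟨hc₁L, hc₂L, hKL⟩ := hΦ' L hL
  have hclose : dist (Φ L) (Φ Ls) < δ := by
    have hLs : Ls ∈ Icc (Ls - ε) (Ls + ε) := ⟨by linarith [hL.1, hL.2], by linarith [hL.1, hL.2]⟩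
    have hlip := (convex_Icc _ _).norm_image_sub_le_of_norm_deriv_le (C := c₂)
      (fun x _ => hΦ.differentiable (by norm_num) x) (fun x hx => ?_) hLs hL
    · rw [Real.dist_eq]
      calc |Φ L - Φ Ls| ≤ c₂ * |L - Ls| := hlip
        _ ≤ c₂ * ε := by
          gcongr
          · linarith
          · exact abs_sub_le_iff.mpr ⟨by linarith [hL.2], by linarith [hL.1]⟩
        _ < δ := hεδ
    · obtain ⟨h₁, h₂, -⟩ := hΦ' x hx
      exact abs_le.mpr ⟨by linarith, h₂⟩
  have hZ'L : |deriv Z (Φ L)| < e := by simpa [Real.dist_eq, hcrit] using hZ'δ hclose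
  have hZ''L : 3 * m / 4 ≤ |deriv (deriv Z) (Φ L)| := by
    have h₁ : m ≤ |deriv (deriv Z) (Φ Ls)| := by simpa [hcrit] using hm (Φ Ls)
    have h₂ := abs_sub_abs_le_abs_sub (deriv (deriv Z) (Φ Ls)) (deriv (deriv Z) (Φ L))
    rw [abs_sub_comm, ← Real.dist_eq] at h₂
    linarith [hZ''δ hclose]
  have hmain : 3 * m / 4 * c₁ ^ 2 ≤ |deriv (deriv Z) (Φ L)| * deriv Φ L ^ 2 :=
    mul_le_mul hZ''L (pow_le_pow_left₀ hc₁.le hc₁L 2) (by positivity) (abs_nonneg _)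
  have hcross : |deriv Z (Φ L)| * |deriv (deriv Φ) L| ≤ e * K :=
    mul_le_mul hZ'L.le hKL (abs_nonneg _) ((abs_nonneg _).trans hZ'L.le)
  have htri : ∀ a b c : ℝ, |a| ≤ |a + b + c| + |b| + |c| := fun a b c => by
    have := abs_add_three (a + b + c) (-b) (-c)
    rwa [abs_neg, abs_neg, show a + b + c + -b + -c = a by ring] at this
  rw [deriv_deriv_comp_add hZ hΦ hρ]
  have := htri (deriv (deriv Z) (Φ L) * deriv Φ L ^ 2) (deriv Z (Φ L) * deriv (deriv Φ) L)
    (deriv (deriv ρ) L)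
  rw [abs_mul, abs_mul, abs_pow, sq_abs] at this
  linarith [hρ'' L hL]

theorem existsUnique_deriv_comp_add_eq_zero (hZ : ContDiff ℝ 2 Z) (hΦ : ContDiff ℝ 2 Φ)
    (hρ : ContDiff ℝ 2 ρ) (hm0 : 0 < m) (hc₁ : 0 < c₁)
    (hm : ∀ φ, m ≤ |deriv Z φ| + |deriv (deriv Z) φ|)
    (hZ'δ : ∀ ⦃x y⦄, dist x y < δ → dist (deriv Z x) (deriv Z y) < e)
    (hZ''δ : ∀ ⦃x y⦄, dist x y < δ → dist (deriv (deriv Z) x) (deriv (deriv Z) y) < m / 4)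
    (heK : e * K ≤ m * c₁ ^ 2 / 4) (hεδ : c₂ * ε < δ)
    (hΦ' : ∀ L ∈ Icc (Ls - ε) (Ls + ε),
      c₁ ≤ deriv Φ L ∧ deriv Φ L ≤ c₂ ∧ |deriv (deriv Φ) L| ≤ K)
    (hρ' : |deriv ρ Ls| < m * c₁ ^ 2 / 4 * ε)
    (hρ'' : ∀ L ∈ Icc (Ls - ε) (Ls + ε), |deriv (deriv ρ) L| < m * c₁ ^ 2 / 4)
    (hcrit : deriv Z (Φ Ls) = 0) :
    (∃! Lh, Lh ∈ Ioo (Ls - ε) (Ls + ε) ∧ deriv (fun L => Z (Φ L) + ρ L) Lh = 0) ∧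
      ∀ Lh ∈ Ioo (Ls - ε) (Ls + ε), deriv (deriv (fun L => Z (Φ L) + ρ L)) Lh ≠ 0 := by
  have hbound := le_abs_deriv_deriv_comp_add hZ hΦ hρ hc₁ hm hZ'δ hZ''δ heK hεδ hΦ' hρ'' hcrit
  have hα : 0 < m * c₁ ^ 2 / 4 := by positivity
  refine ⟨existsUnique_mem_Ioo_eq_zero_of_le_abs_deriv hα
      (fun L _ => ((hZ.comp hΦ).add hρ).differentiable_deriv_two L) hbound ?_,
    fun Lh hLh => abs_pos.mp (hα.trans_le (hbound Lh (Ioo_subset_Icc_self hLh)))⟩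
  simpa only [deriv_comp_add (hZ.differentiable (by norm_num)) (hΦ.differentiable (by norm_num))
    (hρ.differentiable (by norm_num)), hcrit, zero_mul, zero_add] using hρ'

theorem exists_mem_Ioo_eq_zero_of_abs_lt {g : ℝ → ℝ} {r x : ℝ} (hm0 : 0 < m)
    (hg : Differentiable ℝ g) (hm : ∀ y, m ≤ |g y| + |deriv g y|)
    (hδ : ∀ ⦃y z⦄, dist y z < δ → dist (deriv g y) (deriv g z) < m / 4)
    (hrδ : r < δ) (hr1 : r ≤ 1) (hx : |g x| < m / 4 * r) :
    ∃ y ∈ Ioo (x - r) (x + r), g y = 0 := by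
  have hgx : 3 * m / 4 ≤ |deriv g x| := by
    nlinarith [hm x, abs_nonneg (g x)]
  have hg' : ∀ y ∈ Icc (x - r) (x + r), m / 2 ≤ |deriv g y| := by
    intro y hy
    have hyx : dist y x < δ :=
      (abs_sub_le_iff.mpr ⟨by linarith [hy.2], by linarith [hy.1]⟩).trans_lt hrδ
    have h := abs_sub_abs_le_abs_sub (deriv g x) (deriv g y)
    rw [abs_sub_comm, ← Real.dist_eq] at h
    linarith [hδ hyx]
  obtain ⟨y, ⟨hy, hy0⟩, -⟩ := existsUnique_mem_Ioo_eq_zero_of_le_abs_deriv (by positivity)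
    (fun y _ => hg y) hg' (by linarith [abs_nonneg (g x)])
  exact ⟨y, hy, hy0⟩

theorem exists_deriv_comp_eq_zero_near (hZ : ContDiff ℝ 2 Z) (hΦ : Differentiable ℝ Φ)
    (hρ : Differentiable ℝ ρ) (hm0 : 0 < m) (hc₁ : 0 < c₁) (hε : 0 < ε) {L : ℝ}
    (hm : ∀ φ, m ≤ |deriv Z φ| + |deriv (deriv Z) φ|)
    (hZ''δ : ∀ ⦃x y⦄, dist x y < δ → dist (deriv (deriv Z) x) (deriv (deriv Z) y) < m / 4)
    (hεδ : c₁ * ε < δ) (hδ1 : δ ≤ 1) (hΦ' : ∀ L' ∈ Icc (L - ε) (L + ε), c₁ ≤ deriv Φ L')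
    (hρ' : |deriv ρ L| < m * c₁ ^ 2 / 4 * ε)
    (hzero : deriv (fun L => Z (Φ L) + ρ L) L = 0) :
    ∃ Ls, deriv Z (Φ Ls) = 0 ∧ |L - Ls| ≤ ε := by
  simp only [deriv_comp_add (hZ.differentiable (by norm_num)) hΦ hρ] at hzero
  have hsmall : |deriv Z (Φ L)| < m / 4 * (c₁ * ε) := by
    have hc₁L := hΦ' L ⟨by linarith, by linarith⟩
    refine lt_of_mul_lt_mul_right ?_ hc₁.le
    calc |deriv Z (Φ L)| * c₁ ≤ |deriv Z (Φ L)| * deriv Φ L := by gcongr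
      _ = |deriv ρ L| := by
        rw [← abs_of_pos (hc₁.trans_le hc₁L), ← abs_mul, eq_neg_of_add_eq_zero_left hzero,
          abs_neg]
      _ < m / 4 * (c₁ * ε) * c₁ := by linarith
  obtain ⟨ψ, hψ, hψ0⟩ := exists_mem_Ioo_eq_zero_of_abs_lt hm0 (hZ.differentiable_deriv_two)
    hm hZ''δ hεδ (hεδ.le.trans hδ1) hsmall
  have hgrow := (convex_Icc (L - ε) (L + ε)).mul_sub_le_image_sub_of_le_deriv
    hΦ.continuous.continuousOn hΦ.differentiableOn fun x hx => hΦ' x (interior_subset hx)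
  have hleft : c₁ * ε ≤ Φ L - Φ (L - ε) := by
    simpa using hgrow (L - ε) ⟨le_rfl, by linarith⟩ L ⟨by linarith, by linarith⟩ (by linarith)
  have hright : c₁ * ε ≤ Φ (L + ε) - Φ L := by
    simpa using hgrow L ⟨by linarith, by linarith⟩ (L + ε) ⟨by linarith, le_rfl⟩ (by linarith)
  obtain ⟨Ls, hLs, hΦLs⟩ := intermediate_value_Icc (by linarith : L - ε ≤ L + ε)
    hΦ.continuous.continuousOn
    (show ψ ∈ Icc (Φ (L - ε)) (Φ (L + ε)) from ⟨by linarith [hψ.1], by linarith [hψ.2]⟩)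
  exact ⟨Ls, hΦLs ▸ hψ0, abs_le.mpr ⟨by linarith [hLs.2], by linarith [hLs.1]⟩⟩

end Snaking

theorem stmt_10_general (Z : ℝ → ℝ) (hZ : ContDiff ℝ 2 Z)
    (hZper : ∀ φ : ℝ, Z (φ + 2 * Real.pi) = Z φ)
    (hZnd : ∀ φ : ℝ, deriv Z φ = 0 → deriv (deriv Z) φ ≠ 0)
    (c₁ c₂ K L₀ : ℝ) (hc₁ : 0 < c₁) (hc₁₂ : c₁ ≤ c₂) (hK : 0 < K)
    (Φ : ℝ → ℝ) (hΦ : ContDiff ℝ 2 Φ)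
    (hΦ' : ∀ L ≥ L₀, c₁ ≤ deriv Φ L ∧ deriv Φ L ≤ c₂)
    (hΦ'' : ∀ L ≥ L₀, |deriv (deriv Φ) L| ≤ K)
    (η C : ℝ) (hη : 0 < η)
    (ρ : ℝ → ℝ) (hρsm : ContDiff ℝ 2 ρ)
    (hρ : ∀ L ≥ L₀, |ρ L| ≤ C * Real.exp (-η * L) ∧
      |deriv ρ L| ≤ C * Real.exp (-η * L) ∧
      |deriv (deriv ρ) L| ≤ C * Real.exp (-η * L)) :
    ∃ L₁ ≥ L₀, ∃ ε > 0,
      (∀ Ls ≥ L₁, deriv Z (Φ Ls) = 0 →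
        (∃! Lh : ℝ, Lh ∈ Set.Ioo (Ls - ε) (Ls + ε) ∧
          deriv (fun L => Z (Φ L) + ρ L) Lh = 0) ∧
        (∀ Lh ∈ Set.Ioo (Ls - ε) (Ls + ε),
          deriv (fun L => Z (Φ L) + ρ L) Lh = 0 →
          deriv (deriv (fun L => Z (Φ L) + ρ L)) Lh ≠ 0)) ∧
      (∀ L ≥ L₁ + ε, deriv (fun L' => Z (Φ L') + ρ L') L = 0 →
        ∃ Ls : ℝ, deriv Z (Φ Ls) = 0 ∧ |L - Ls| ≤ ε) := by
  have hc₂ : 0 < c₂ := hc₁.trans_le hc₁₂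
  have hper : Function.Periodic Z (2 * π) := hZper
  obtain ⟨m, hm0, hm⟩ := exists_pos_le_abs_deriv_add_abs_deriv_deriv hZ hper two_pi_pos.ne' hZnd
  obtain ⟨δ₁, hδ₁, hZ'δ⟩ := Metric.uniformContinuous_iff.mp
    (hper.deriv.uniformContinuous_of_continuous two_pi_pos (hZ.continuous_deriv (by norm_num)))
    (m * c₁ ^ 2 / 4 / K) (by positivity)
  obtain ⟨δ₂, hδ₂, hZ''δ⟩ := Metric.uniformContinuous_iff.mp
    (hper.deriv.deriv.uniformContinuous_of_continuous two_pi_pos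
      ((hZ.deriv' (n := 1)).continuous_deriv le_rfl)) (m / 4) (by positivity)
  set δ := min (min δ₁ δ₂) 1
  have hδ : 0 < δ := by positivity
  set ε := δ / (2 * c₂) with hε_def
  have hε : 0 < ε := by positivity
  have hεδ : c₂ * ε < δ := by
    rw [hε_def, mul_div_assoc', mul_comm 2 c₂, ← div_div, mul_div_cancel_left₀ _ hc₂.ne']
    linarith
  obtain ⟨N, hN⟩ := eventually_atTop.mp <| (eventually_ge_atTop L₀).and <|
    (eventually_abs_lt_of_abs_le_mul_exp hη (by positivity : 0 < m * c₁ ^ 2 / 4 * ε)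
      fun L hL => (hρ L hL).2.1).and
    (eventually_abs_lt_of_abs_le_mul_exp hη (by positivity : 0 < m * c₁ ^ 2 / 4)
      fun L hL => (hρ L hL).2.2)
  refine ⟨N + ε, by linarith [(hN N le_rfl).1], ε, hε,
    fun Ls hLs hcrit => ?_, fun L hL hzero => ?_⟩
  · have hN' : ∀ L ∈ Icc (Ls - ε) (Ls + ε), N ≤ L := fun L hL => by linarith [hL.1]
    obtain ⟨hexists, hnondeg⟩ := existsUnique_deriv_comp_add_eq_zero hZ hΦ hρsm hm0 hc₁ hm
      (fun x y h => hZ'δ (h.trans_le ((min_le_left _ _).trans (min_le_left _ _))))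
      (fun x y h => hZ''δ (h.trans_le ((min_le_left _ _).trans (min_le_right _ _))))
      (div_mul_cancel₀ _ hK.ne').le hεδ
      (fun L hL => ⟨(hΦ' L (hN L (hN' L hL)).1).1, (hΦ' L (hN L (hN' L hL)).1).2,
        hΦ'' L (hN L (hN' L hL)).1⟩)
      (hN Ls (by linarith)).2.1 (fun L hL => (hN L (hN' L hL)).2.2) hcrit
    exact ⟨hexists, fun Lh hLh _ => hnondeg Lh hLh⟩
  · exact exists_deriv_comp_eq_zero_near hZ (hΦ.differentiable (by norm_num))
      (hρsm.differentiable (by norm_num)) hm0 hc₁ hε hm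
      (fun x y h => hZ''δ (h.trans_le ((min_le_left _ _).trans (min_le_right _ _))))
      ((mul_le_mul_of_nonneg_right hc₁₂ (by positivity)).trans_lt hεδ) (min_le_right _ _)
      (fun L' hL' => (hΦ' L' (hN L' (by linarith [hL'.1])).1).1) (hN L (by linarith)).2.1 hzero

/-- Shape of the snaking curve: for `λ₂(L) = Z(Φ(L)) + ρ(L)` with `Z` having only nondegenerate
critical points, `Φ` a C² map with derivative bounded between positive constants, and `ρ`
exponentially small in C², for large `L` the derivative `λ₂'` has exactly one (nondegenerate)
zero near each point where `Z'∘Φ` vanishes, and no other zeros. -/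
theorem stmt_10 (Z : ℝ → ℝ) (hZ : ContDiff ℝ 2 Z)
    (hZper : ∀ φ : ℝ, Z (φ + 2 * Real.pi) = Z φ)
    (hZnd : ∀ φ : ℝ, deriv Z φ = 0 → deriv (deriv Z) φ ≠ 0)
    (c₁ c₂ K L₀ : ℝ) (hc₁ : 0 < c₁) (hc₁₂ : c₁ ≤ c₂) (hK : 0 < K)
    (Φ : ℝ → ℝ) (hΦ : ContDiff ℝ 2 Φ)
    (hΦ' : ∀ L ≥ L₀, c₁ ≤ deriv Φ L ∧ deriv Φ L ≤ c₂)
    (hΦ'' : ∀ L ≥ L₀, |deriv (deriv Φ) L| ≤ K)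
    (η C : ℝ) (hη : 0 < η) (hC : 0 < C)
    (ρ : ℝ → ℝ) (hρsm : ContDiff ℝ 2 ρ)
    (hρ : ∀ L ≥ L₀, |ρ L| ≤ C * Real.exp (-η * L) ∧
      |deriv ρ L| ≤ C * Real.exp (-η * L) ∧
      |deriv (deriv ρ) L| ≤ C * Real.exp (-η * L)) :
    ∃ L₁ ≥ L₀, ∃ ε > 0,
      (∀ Ls ≥ L₁, deriv Z (Φ Ls) = 0 →
        (∃! Lh : ℝ, Lh ∈ Set.Ioo (Ls - ε) (Ls + ε) ∧
          deriv (fun L => Z (Φ L) + ρ L) Lh = 0) ∧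
        (∀ Lh ∈ Set.Ioo (Ls - ε) (Ls + ε),
          deriv (fun L => Z (Φ L) + ρ L) Lh = 0 →
          deriv (deriv (fun L => Z (Φ L) + ρ L)) Lh ≠ 0)) ∧
      (∀ L ≥ L₁ + ε, deriv (fun L' => Z (Φ L') + ρ L') L = 0 →
        ∃ Ls : ℝ, deriv Z (Φ Ls) = 0 ∧ |L - Ls| ≤ ε) :=
  stmt_10_general Z hZ hZper hZnd c₁ c₂ K L₀ hc₁ hc₁₂ hK Φ hΦ hΦ' hΦ'' η C hη ρ hρsm hρ
end
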